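/- arXiv:2212.06213 — 12 statements merged into one kernel-verified Lean document; each statement's English description precedes it below -/
import Mathlib

section
/- For a cancellative commutative monoid M, the following are equivalent: (a) M is atomic and every nonempty finite subset S of M has a common divisor d ∈ M such that s−d satisfies ACCP for some s ∈ S; (b) every nonempty finite subset S of M has a common divisor d that is a sum of atoms (possibly empty) such that s−d satisfies ACCP for some s ∈ S. -/
def PIdeal {M : Type*} [AddCommMonoid M] (b : M) : Set M := {x | ∃ c, x = b + c}

def ElemACCP {M : Type*} [AddCommMonoid M] (b : M) : Prop :=
  ∀ f : ℕ → M, f 0 = b → (∀ n, PIdeal (f n) ⊆ PIdeal (f (n + 1))) →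
    ∃ N, ∀ n, N ≤ n → PIdeal (f n) = PIdeal (f N)

def IsAddAtom {M : Type*} [AddCommMonoid M] (a : M) : Prop :=
  ¬ IsAddUnit a ∧ ∀ u v : M, a = u + v → IsAddUnit u ∨ IsAddUnit v

/-- `M` is atomic: every non-invertible element is a sum of atoms. -/
def AddAtomic (M : Type*) [AddCommMonoid M] : Prop :=
  ∀ b : M, ¬ IsAddUnit b → ∃ l : Multiset M, (∀ a ∈ l, IsAddAtom a) ∧ l.sum = b

/-!
An element satisfying ACCP is a unit plus a sum of atoms: otherwise it splits off a non-unit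
summand while still lacking such a factorization, and iterating this produces a strictly ascending
chain of principal ideals. So in (b), taking `S = {b}` writes a non-unit `b` as a sum of atoms plus
such an element, which gives atomicity. In (a), a common divisor `d` that is a unit may be replaced
by `0`, since ACCP passes from `s - d` to its divisor `s`.
-/

section AddCommMonoid

variable {M : Type*} [AddCommMonoid M]

theorem isAddAtom_iff_addIrreducible {a : M} : IsAddAtom a ↔ AddIrreducible a := by
  rw [addIrreducible_iff]
  rfl

theorem IsAddAtom.isAddUnit_add {u a : M} (hu : IsAddUnit u) (ha : IsAddAtom a) :
    IsAddAtom (u + a) := by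
  rw [isAddAtom_iff_addIrreducible] at ha ⊢
  exact (addIrreducible_isAddUnit_add hu).2 ha

theorem self_mem_pIdeal (a : M) : a ∈ PIdeal a := ⟨0, (add_zero a).symm⟩

theorem pIdeal_subset_of_eq_add {a b c : M} (h : a = b + c) : PIdeal a ⊆ PIdeal b := by
  rintro x ⟨e, rfl⟩
  exact ⟨c + e, by rw [h, add_assoc]⟩

theorem ElemACCP.of_eq_add {b b' e : M} (hb : ElemACCP b) (h : b = b' + e) : ElemACCP b' := by
  intro f hf0 hf
  let g : ℕ → M := fun n => if n = 0 then b else f n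
  have hgf : ∀ n, 1 ≤ n → g n = f n := fun n hn => if_neg (by omega)
  have hg_chain : ∀ n, PIdeal (g n) ⊆ PIdeal (g (n + 1)) := by
    rintro (_ | n)
    · exact (pIdeal_subset_of_eq_add h).trans (hf0 ▸ hf 0)
    · rw [hgf _ (by omega), hgf _ (by omega)]
      exact hf _
  obtain ⟨N, hN⟩ := hb g (if_pos rfl) hg_chain
  refine ⟨N + 1, fun n hn => ?_⟩
  rw [← hgf n (by omega), ← hgf (N + 1) (by omega), hN n (by omega), hN (N + 1) (by omega)]

def AddFactorable (x : M) : Prop :=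
  ∃ u : M, ∃ l : Multiset M, IsAddUnit u ∧ (∀ a ∈ l, IsAddAtom a) ∧ u + l.sum = x

theorem AddFactorable.of_sum_atoms {l : Multiset M} (hl : ∀ a ∈ l, IsAddAtom a) :
    AddFactorable l.sum :=
  ⟨0, l, isAddUnit_zero, hl, zero_add _⟩

theorem AddFactorable.add {x y : M} (hx : AddFactorable x) (hy : AddFactorable y) :
    AddFactorable (x + y) := by
  obtain ⟨u, l, hu, hl, rfl⟩ := hx
  obtain ⟨u', l', hu', hl', rfl⟩ := hy
  refine ⟨u + u', l + l', hu.add hu', fun a ha => ?_, ?_⟩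
  · exact (Multiset.mem_add.1 ha).elim (hl a) (hl' a)
  · rw [Multiset.sum_add]
    abel

theorem AddFactorable.exists_sum_atoms {x : M} (hx : AddFactorable x) (hxu : ¬IsAddUnit x) :
    ∃ l : Multiset M, (∀ a ∈ l, IsAddAtom a) ∧ l.sum = x := by
  obtain ⟨u, l, hu, hl, rfl⟩ := hx
  induction l using Multiset.induction_on with
  | empty => simp only [Multiset.sum_zero, add_zero] at hxu; exact absurd hu hxu
  | cons a t _ =>
    refine ⟨(u + a) ::ₘ t, fun b hb => ?_, ?_⟩
    · rcases Multiset.mem_cons.1 hb with rfl | hb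
      · exact (hl a (Multiset.mem_cons_self a t)).isAddUnit_add hu
      · exact hl b (Multiset.mem_cons_of_mem hb)
    · rw [Multiset.sum_cons, Multiset.sum_cons, add_assoc]

theorem exists_add_of_not_addFactorable {x : M} (hx : ¬AddFactorable x) :
    ∃ u v : M, x = u + v ∧ ¬AddFactorable u ∧ ¬IsAddUnit v := by
  have hxu : ¬IsAddUnit x := fun h => hx ⟨x, 0, h, by simp, add_zero x⟩
  have hxa : ¬IsAddAtom x := fun h => hx <| by
    simpa using AddFactorable.of_sum_atoms (l := {x}) (by simpa using h)
  obtain ⟨u, v, rfl, hu, hv⟩ : ∃ u v : M, x = u + v ∧ ¬IsAddUnit u ∧ ¬IsAddUnit v := by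
    simpa [IsAddAtom, hxu, not_or] using hxa
  by_cases hfu : AddFactorable u
  · have hfv : ¬AddFactorable v := fun hfv => hx (hfu.add hfv)
    exact ⟨v, u, add_comm u v, hfv, hu⟩
  · exact ⟨u, v, rfl, hfu, hv⟩

end AddCommMonoid

section AddCancelCommMonoid

variable {M : Type*} [AddCancelCommMonoid M]

theorem isAddUnit_of_mem_pIdeal {x u v : M} (h : x = u + v) (hu : u ∈ PIdeal x) :
    IsAddUnit v := by
  obtain ⟨e, rfl⟩ := hu
  have : x + (e + v) = x + 0 := by rw [add_zero, ← add_assoc, ← h]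
  exact .of_add_eq_zero_right e (add_left_cancel this)

theorem ElemACCP.induction {P : M → Prop} {c : M} (hc : ElemACCP c)
    (step : ∀ x, ¬P x → ∃ u v, x = u + v ∧ ¬P u ∧ ¬IsAddUnit v) : P c := by
  by_contra hPc
  have step' : ∀ x : {x // ¬P x}, ∃ y : {x // ¬P x}, ∃ v, x.1 = y.1 + v ∧ ¬IsAddUnit v :=
    fun x => let ⟨u, v, h, hu, hv⟩ := step x.1 x.2; ⟨⟨u, hu⟩, v, h, hv⟩
  choose next v hnext hv using step'
  let g : ℕ → {x // ¬P x} := fun n => next^[n] ⟨c, hPc⟩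
  have hg : ∀ n, (g n).1 = (g (n + 1)).1 + v (g n) := fun n => by
    simp only [g, Function.iterate_succ_apply']
    exact hnext _
  obtain ⟨N, hN⟩ := hc (fun n => (g n).1) rfl (fun n => pIdeal_subset_of_eq_add (hg n))
  have hmem : (g (N + 1)).1 ∈ PIdeal (g N).1 := hN (N + 1) N.le_succ ▸ self_mem_pIdeal _
  exact hv _ (isAddUnit_of_mem_pIdeal (hg N) hmem)

theorem ElemACCP.addFactorable {c : M} (hc : ElemACCP c) : AddFactorable c :=
  hc.induction fun _ => exists_add_of_not_addFactorable

end AddCancelCommMonoid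

theorem stmt1 {M : Type*} [AddCancelCommMonoid M] :
    (AddAtomic M ∧ ∀ S : Finset M, S.Nonempty →
        ∃ d : M, (∀ s ∈ S, ∃ c, s = d + c) ∧ ∃ s ∈ S, ∃ c, s = d + c ∧ ElemACCP c)
    ↔
    (∀ S : Finset M, S.Nonempty →
        ∃ d : M, (∃ l : Multiset M, (∀ a ∈ l, IsAddAtom a) ∧ l.sum = d) ∧
          (∀ s ∈ S, ∃ c, s = d + c) ∧ ∃ s ∈ S, ∃ c, s = d + c ∧ ElemACCP c) := by
  constructor
  · rintro ⟨hatomic, hcd⟩ S hS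
    obtain ⟨d, hdiv, s, hsS, c, rfl, hc⟩ := hcd S hS
    by_cases hd : IsAddUnit d
    · obtain ⟨e, hde⟩ := hd.exists_neg
      have hs : ElemACCP (d + c) := hc.of_eq_add (by rw [add_right_comm, hde, zero_add])
      exact ⟨0, ⟨0, by simp, by simp⟩, fun t _ => ⟨t, (zero_add t).symm⟩,
        d + c, hsS, d + c, (zero_add _).symm, hs⟩
    · exact ⟨d, hatomic d hd, hdiv, d + c, hsS, c, rfl, hc⟩
  · intro h
    refine ⟨fun b hb => ?_, fun S hS => ?_⟩
    · obtain ⟨d, ⟨l, hl, rfl⟩, -, s, hs, c, hsc, hc⟩ := h {b} (Finset.singleton_nonempty b)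
      rw [Finset.mem_singleton.1 hs] at hsc
      have hbf : AddFactorable b := hsc ▸ (AddFactorable.of_sum_atoms hl).add hc.addFactorable
      exact hbf.exists_sum_atoms hb
    · obtain ⟨d, -, hdiv, hw⟩ := h S hS
      exact ⟨d, hdiv, hw⟩
end

section
/- Every weak-ACCP cancellative commutative monoid is strongly atomic. -/
def AddWeakACCP (M : Type*) [AddCommMonoid M] : Prop :=
  AddAtomic M ∧ ∀ S : Finset M, S.Nonempty →
    ∃ d : M, (∀ s ∈ S, ∃ c, s = d + c) ∧ ∃ s ∈ S, ∃ c, s = d + c ∧ ElemACCP c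

/-- `M` is strongly atomic: any `b, c` have a common divisor `d` that is a sum of atoms
such that the only common divisors of `b - d` and `c - d` are invertible. -/
def AddStronglyAtomic (M : Type*) [AddCommMonoid M] : Prop :=
  ∀ b c : M, ∃ d b' c' : M, b = d + b' ∧ c = d + c' ∧
    (∃ l : Multiset M, (∀ a ∈ l, IsAddAtom a) ∧ l.sum = d) ∧
    ∀ e : M, (∃ x, b' = e + x) → (∃ y, c' = e + y) → IsAddUnit e


/-!
A strictly descending chain of proper summands `b = e₀ + b₁, b₁ = e₁ + b₂, …` (each `eᵢ` a
non-unit) is a strictly ascending chain of principal ideals, so below an ACCP element `b₀` the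
relation "proper summand" is well-founded. Peeling off non-unit common summands of `b₀` and `c`
one at a time therefore stops, at a pair with only unit common summands, and the peeled-off
summands are sums of atoms by atomicity. In a weak-ACCP monoid every pair `b, c` has a common
summand `d₀` leaving such a `b₀` (or `c₀`) behind, and `d₀` is again an atom sum or a unit.
-/

section AddCommMonoid

variable {M : Type*} [AddCommMonoid M]

def IsAtomSum (d : M) : Prop := ∃ l : Multiset M, (∀ a ∈ l, IsAddAtom a) ∧ l.sum = d

theorem IsAtomSum.zero : IsAtomSum (0 : M) := ⟨0, by simp, Multiset.sum_zero⟩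

theorem IsAtomSum.add {d₁ d₂ : M} : IsAtomSum d₁ → IsAtomSum d₂ → IsAtomSum (d₁ + d₂)
  | ⟨l₁, hl₁, hs₁⟩, ⟨l₂, hl₂, hs₂⟩ =>
    ⟨l₁ + l₂, fun a ha => (Multiset.mem_add.1 ha).elim (hl₁ a) (hl₂ a),
      by rw [Multiset.sum_add, hs₁, hs₂]⟩

/-- The additive analogue of `IsRelPrime`. -/
def IsAddRelPrime (b c : M) : Prop :=
  ∀ e : M, (∃ x, b = e + x) → (∃ y, c = e + y) → IsAddUnit e

theorem IsAddRelPrime.symm {b c : M} (h : IsAddRelPrime b c) : IsAddRelPrime c b :=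
  fun e hc hb => h e hb hc

theorem exists_eq_add_of_isAddUnit_add {u b e : M} (hu : IsAddUnit u) (h : ∃ x, u + b = e + x) :
    ∃ x, b = e + x := by
  obtain ⟨v, hv⟩ := hu.exists_neg'
  obtain ⟨x, hx⟩ := h
  exact ⟨v + x, by rw [add_left_comm, ← hx, ← add_assoc, hv, zero_add]⟩

theorem IsAddRelPrime.add_left_of_isAddUnit {u b c : M} (hu : IsAddUnit u)
    (h : IsAddRelPrime b c) : IsAddRelPrime (u + b) (u + c) := fun e hb hc =>
  h e (exists_eq_add_of_isAddUnit_add hu hb) (exists_eq_add_of_isAddUnit_add hu hc)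

def StronglyAtomicPair (b c : M) : Prop :=
  ∃ d b' c' : M, b = d + b' ∧ c = d + c' ∧ IsAtomSum d ∧ IsAddRelPrime b' c'

theorem addStronglyAtomic_iff : AddStronglyAtomic M ↔ ∀ b c : M, StronglyAtomicPair b c :=
  Iff.rfl

namespace StronglyAtomicPair

variable {b c : M}

theorem of_isAddRelPrime (h : IsAddRelPrime b c) : StronglyAtomicPair b c :=
  ⟨0, b, c, (zero_add b).symm, (zero_add c).symm, .zero, h⟩

theorem symm : StronglyAtomicPair b c → StronglyAtomicPair c b
  | ⟨d, b', c', hb, hc, hd, h⟩ => ⟨d, c', b', hc, hb, hd, h.symm⟩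

theorem add_left_of_isAddUnit {u : M} (hu : IsAddUnit u) :
    StronglyAtomicPair b c → StronglyAtomicPair (u + b) (u + c)
  | ⟨d, b', c', hb, hc, hd, h⟩ =>
    ⟨d, u + b', u + c', by rw [hb, add_left_comm], by rw [hc, add_left_comm], hd,
      h.add_left_of_isAddUnit hu⟩

theorem add_left_of_isAtomSum {d₀ : M} (hd₀ : IsAtomSum d₀) :
    StronglyAtomicPair b c → StronglyAtomicPair (d₀ + b) (d₀ + c)
  | ⟨d, b', c', hb, hc, hd, h⟩ =>
    ⟨d₀ + d, b', c', by rw [hb, add_assoc], by rw [hc, add_assoc], hd₀.add hd, h⟩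

theorem add_left (hat : AddAtomic M) (d₀ : M) (h : StronglyAtomicPair b c) :
    StronglyAtomicPair (d₀ + b) (d₀ + c) := by
  by_cases hd₀ : IsAddUnit d₀
  · exact h.add_left_of_isAddUnit hd₀
  · exact h.add_left_of_isAtomSum (hat d₀ hd₀)

end StronglyAtomicPair

def IsProperSummand (x y : M) : Prop := ∃ e, ¬ IsAddUnit e ∧ y = e + x

theorem stronglyAtomicPair_of_acc (hat : AddAtomic M) {b : M} (hb : Acc IsProperSummand b)
    (c : M) : StronglyAtomicPair b c := by
  induction hb generalizing c with
  | intro b _ ih =>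
    by_cases hbc : IsAddRelPrime b c
    · exact .of_isAddRelPrime hbc
    · obtain ⟨e, ⟨b₁, rfl⟩, ⟨c₁, rfl⟩, he⟩ : ∃ e, (∃ x, b = e + x) ∧ (∃ y, c = e + y) ∧
          ¬ IsAddUnit e := by
        simpa [IsAddRelPrime] using hbc
      exact (ih b₁ ⟨e, he, rfl⟩ c₁).add_left hat e

end AddCommMonoid

section AddCancelCommMonoid

variable {M : Type*} [AddCancelCommMonoid M]

theorem acc_isProperSummand_of_elemACCP {b : M} (hb : ElemACCP b) : Acc IsProperSummand b := by
  by_contra hacc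
  obtain ⟨f, hf0, hf⟩ := not_acc_iff_exists_descending_chain.1 hacc
  have hmono : ∀ n, PIdeal (f n) ⊆ PIdeal (f (n + 1)) := by
    rintro n x ⟨c, rfl⟩
    obtain ⟨e, -, he⟩ := hf n
    exact ⟨e + c, by rw [he]; ac_rfl⟩
  obtain ⟨N, hN⟩ := hb f hf0 hmono
  obtain ⟨e, he, hfN⟩ := hf N
  obtain ⟨c, hc⟩ : f (N + 1) ∈ PIdeal (f N) := hN (N + 1) N.le_succ ▸ ⟨0, (add_zero _).symm⟩
  have hec : f (N + 1) + (e + c) = f (N + 1) :=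
    calc f (N + 1) + (e + c) = e + f (N + 1) + c := by ac_rfl
      _ = f (N + 1) := by rw [← hfN, ← hc]
  exact he (.of_add_eq_zero c (add_eq_left.1 hec))

theorem stronglyAtomicPair_add_of_elemACCP (hat : AddAtomic M) {d₀ b₀ c₀ : M}
    (hb₀ : ElemACCP b₀) : StronglyAtomicPair (d₀ + b₀) (d₀ + c₀) :=
  (stronglyAtomicPair_of_acc hat (acc_isProperSummand_of_elemACCP hb₀) c₀).add_left hat d₀

end AddCancelCommMonoid

theorem stmt3 (M : Type*) [AddCancelCommMonoid M] (h : AddWeakACCP M) :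
    AddStronglyAtomic M := by
  classical
  obtain ⟨hat, hw⟩ := h
  refine addStronglyAtomic_iff.2 fun b c => ?_
  obtain ⟨d₀, hdiv, s, hs, s₀, hs₀, hacc⟩ := hw {b, c} (Finset.insert_nonempty b {c})
  obtain ⟨b₀, rfl⟩ := hdiv b (by simp)
  obtain ⟨c₀, rfl⟩ := hdiv c (by simp)
  rcases Finset.mem_insert.1 hs with rfl | hs
  · rw [add_left_cancel hs₀]
    exact stronglyAtomicPair_add_of_elemACCP hat hacc
  · obtain rfl := Finset.mem_singleton.1 hs
    rw [add_left_cancel hs₀]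
    exact (stronglyAtomicPair_add_of_elemACCP hat hacc).symm
end

section
/- For a prime p and increasing sequence (pₙ) enumerating the primes different from p, the monoid Gₚ = ⟨1/(pⁿ pₙ) : n⟩ ⊆ ℚ≥0 does not satisfy ACCP: the ascending chain of principal ideals (1/pⁿ + Gₚ)ₙ∈ℕ is strictly increasing and does not stabilize. -/
/-- The coset `b + G` inside `ℚ` (a "principal ideal" of the submonoid `G`). -/
def cosetQ (G : AddSubmonoid ℚ) (b : ℚ) : Set ℚ := {x | ∃ c ∈ G, x = b + c}

/-- `b` satisfies ACCP in `G`. -/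
def ACCPQat (G : AddSubmonoid ℚ) (b : ℚ) : Prop :=
  ∀ f : ℕ → ℚ, f 0 = b → (∀ n, f n ∈ G) →
    (∀ n, cosetQ G (f n) ⊆ cosetQ G (f (n + 1))) →
      ∃ N, ∀ n, N ≤ n → cosetQ G (f n) = cosetQ G (f N)

/-- `G` satisfies ACCP. -/
def ACCPQ (G : AddSubmonoid ℚ) : Prop := ∀ b ∈ G, ACCPQat G b


/-! A generator `1 / (pⁿ pₙ)` added to itself `pₙ` times gives `1 / pⁿ`, so `1 / pⁿ ∈ Gₚ`; and
`1 / pⁿ - 1 / pⁿ⁺¹ = (p - 1) • (1 / pⁿ⁺¹) ∈ Gₚ`, so the ideals `1 / pⁿ + Gₚ` increase. They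
increase strictly because `Gₚ` is nonnegative while `1 / pⁿ⁺¹ < 1 / pⁿ`. -/

theorem AddSubmonoid.nonneg_of_mem_closure {M : Type*} [AddMonoid M] [Preorder M]
    [AddLeftMono M] {s : Set M} (hs : ∀ x ∈ s, 0 ≤ x) {x : M}
    (hx : x ∈ AddSubmonoid.closure s) : 0 ≤ x :=
  AddSubmonoid.closure_induction hs le_rfl (fun _ _ _ _ => add_nonneg) hx

theorem cosetQ_subset_cosetQ_of_sub_mem {G : AddSubmonoid ℚ} {a b : ℚ} (h : a - b ∈ G) :
    cosetQ G a ⊆ cosetQ G b := by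
  rintro x ⟨c, hc, rfl⟩
  exact ⟨a - b + c, G.add_mem h hc, by ring⟩

theorem cosetQ_ne_of_lt {G : AddSubmonoid ℚ} (hG : ∀ x ∈ G, 0 ≤ x) {a b : ℚ} (hab : b < a) :
    cosetQ G a ≠ cosetQ G b := by
  intro h
  have hb : b ∈ cosetQ G a := h ▸ ⟨0, G.zero_mem, (add_zero b).symm⟩
  obtain ⟨c, hc, rfl⟩ := hb
  linarith [hG c hc]

theorem not_ACCPQ_of_strict_chain {G : AddSubmonoid ℚ} (f : ℕ → ℚ) (hf : ∀ n, f n ∈ G)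
    (hsub : ∀ n, cosetQ G (f n) ⊆ cosetQ G (f (n + 1)))
    (hne : ∀ n, cosetQ G (f n) ≠ cosetQ G (f (n + 1))) : ¬ ACCPQ G := by
  intro h
  obtain ⟨N, hN⟩ := h (f 0) (hf 0) f rfl hf hsub
  exact hne N (hN (N + 1) N.le_succ).symm

theorem one_div_pow_mem_closure {p : ℕ} {ps : ℕ → ℕ} {n : ℕ} (hn : ps n ≠ 0) :
    1 / (p : ℚ) ^ n ∈
      AddSubmonoid.closure {x : ℚ | ∃ n : ℕ, x = 1 / ((p : ℚ) ^ n * (ps n : ℚ))} := by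
  have hgen := AddSubmonoid.nsmul_mem _
    (AddSubmonoid.subset_closure (s := {x : ℚ | ∃ n : ℕ, x = 1 / ((p : ℚ) ^ n * (ps n : ℚ))})
      ⟨n, rfl⟩) (ps n)
  have hn' : (ps n : ℚ) ≠ 0 := by exact_mod_cast hn
  rwa [nsmul_eq_mul, one_div, mul_inv_rev, mul_inv_cancel_left₀ hn', ← one_div] at hgen

theorem one_div_pow_sub_one_div_pow_succ_mem {G : AddSubmonoid ℚ} {p : ℕ} (hp : 1 ≤ p)
    {n : ℕ} (h : 1 / (p : ℚ) ^ (n + 1) ∈ G) : 1 / (p : ℚ) ^ n - 1 / (p : ℚ) ^ (n + 1) ∈ G := by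
  convert G.nsmul_mem h (p - 1) using 1
  rw [nsmul_eq_mul, Nat.cast_sub hp]
  field_simp
  ring

theorem stmt5_general (p : ℕ) (hp : p.Prime) (ps : ℕ → ℕ)
    (hprime : ∀ n, (ps n).Prime)
    (G : AddSubmonoid ℚ)
    (hG : G = AddSubmonoid.closure {x : ℚ | ∃ n : ℕ, x = 1 / ((p : ℚ) ^ n * (ps n : ℚ))}) :
    (∀ n : ℕ, (1 / (p : ℚ) ^ (n + 1)) ∈ G) ∧
    (∀ n : ℕ, cosetQ G (1 / (p : ℚ) ^ (n + 1)) ⊆ cosetQ G (1 / (p : ℚ) ^ (n + 2)) ∧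
      cosetQ G (1 / (p : ℚ) ^ (n + 1)) ≠ cosetQ G (1 / (p : ℚ) ^ (n + 2))) ∧
    ¬ ACCPQ G := by
  have hp1 : (1 : ℚ) < p := by exact_mod_cast hp.one_lt
  have hmem : ∀ n, 1 / (p : ℚ) ^ n ∈ G := fun n => hG ▸ one_div_pow_mem_closure (hprime n).ne_zero
  have hG0 : ∀ x ∈ G, 0 ≤ x := fun x hx =>
    AddSubmonoid.nonneg_of_mem_closure (by rintro _ ⟨n, rfl⟩; positivity) (hG ▸ hx)
  have hsub : ∀ n, cosetQ G (1 / (p : ℚ) ^ n) ⊆ cosetQ G (1 / (p : ℚ) ^ (n + 1)) := fun n =>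
    cosetQ_subset_cosetQ_of_sub_mem (one_div_pow_sub_one_div_pow_succ_mem hp.one_lt.le (hmem _))
  have hne : ∀ n, cosetQ G (1 / (p : ℚ) ^ n) ≠ cosetQ G (1 / (p : ℚ) ^ (n + 1)) := fun n =>
    cosetQ_ne_of_lt hG0 (one_div_pow_lt_one_div_pow_of_lt hp1 n.lt_succ_self)
  exact ⟨fun n => hmem _, fun n => ⟨hsub _, hne _⟩,
    not_ACCPQ_of_strict_chain (fun n => 1 / (p : ℚ) ^ (n + 1)) (fun _ => hmem _)
      (fun _ => hsub _) (fun _ => hne _)⟩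

theorem stmt5 (p : ℕ) (hp : p.Prime) (ps : ℕ → ℕ)
    (hmono : StrictMono ps) (hprime : ∀ n, (ps n).Prime) (hne : ∀ n, ps n ≠ p)
    (hall : ∀ q : ℕ, q.Prime → q ≠ p → ∃ n, ps n = q)
    (G : AddSubmonoid ℚ)
    (hG : G = AddSubmonoid.closure {x : ℚ | ∃ n : ℕ, x = 1 / ((p : ℚ) ^ n * (ps n : ℚ))}) :
    (∀ n : ℕ, (1 / (p : ℚ) ^ (n + 1)) ∈ G) ∧
    (∀ n : ℕ, cosetQ G (1 / (p : ℚ) ^ (n + 1)) ⊆ cosetQ G (1 / (p : ℚ) ^ (n + 2)) ∧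
      cosetQ G (1 / (p : ℚ) ^ (n + 1)) ≠ cosetQ G (1 / (p : ℚ) ^ (n + 2))) ∧
    ¬ ACCPQ G :=
  stmt5_general p hp ps hprime G hG
end

section
/- Let (pₙ) be the increasing enumeration of the primes, set qₙ = pₙ·pₙ₊₂, and let M = ⟨1/qₙ : n ∈ ℕ⟩ ⊆ ℚ≥0. Then the only common divisor of 1/2 and 1/3 in M is 0. -/
/-!
Split the primes into `P₀ = {pₙ : n even}` and `P₁ = {pₙ : n odd}`. Every generator
`1/(pₙpₙ₊₂)` has its denominator supported on one of the two classes, so every element of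
`M` is `u + v` with `u, v ≥ 0` and the denominators of `u`, `v` supported on `P₀`, `P₁`
respectively. If `d = u + v` divides `1/2`, i.e. `1/2 = d + a`, then the `P₁`-part
`v + a₁` equals `1/2` minus something supported on `P₀`, so it is supported on both classes,
hence an integer in `[0, 1/2]`, hence `0`; thus `v = 0`. Symmetrically, since
`1/3` is supported on `P₁`, dividing `1/3` forces `u = 0`.
-/

/-- The `n`-th prime, 0-indexed: `nthPrime 0 = 2`, `nthPrime 1 = 3`, ... -/
noncomputable def nthPrime (n : ℕ) : ℕ := Nat.nth Nat.Prime n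

/-- The monoid `M = ⟨1/(pₙ pₙ₊₂) : n⟩`. -/
noncomputable def Mq : AddSubmonoid ℚ :=
  AddSubmonoid.closure {x : ℚ | ∃ n : ℕ, x = 1 / ((nthPrime n : ℚ) * (nthPrime (n + 2) : ℚ))}

namespace Rat

/-- The additive group of `ℤ[1/p : p ∈ S]`. -/
def denFactorsIn (S : Set ℕ) : AddSubgroup ℚ where
  carrier := {x | ↑x.den.primeFactors ⊆ S}
  zero_mem' := by simp
  add_mem' {x y} hx hy := by
    have hxy := Nat.primeFactors_mono (add_den_dvd x y) (by positivity)
    rw [Nat.primeFactors_mul x.den_nz y.den_nz] at hxy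
    exact (Finset.coe_subset.2 hxy).trans (by simpa using Set.union_subset hx hy)
  neg_mem' {x} hx := by simpa using hx

theorem mem_denFactorsIn {S : Set ℕ} {x : ℚ} :
    x ∈ denFactorsIn S ↔ ↑x.den.primeFactors ⊆ S :=
  Iff.rfl

theorem denFactorsIn_mono {S T : Set ℕ} (h : S ⊆ T) : denFactorsIn S ≤ denFactorsIn T :=
  fun _ hx => (mem_denFactorsIn.1 hx).trans h

theorem inv_natCast_mem_denFactorsIn (n : ℕ) :
    (n : ℚ)⁻¹ ∈ denFactorsIn n.primeFactors := by
  rw [mem_denFactorsIn, inv_natCast_den]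
  split_ifs <;> simp_all

theorem den_eq_one_of_mem_denFactorsIn_of_disjoint {S T : Set ℕ} (hST : Disjoint S T) {x : ℚ}
    (hS : x ∈ denFactorsIn S) (hT : x ∈ denFactorsIn T) : x.den = 1 := by
  have hempty : x.den.primeFactors = ∅ := by
    rw [← Finset.coe_eq_empty, ← Set.subset_empty_iff,
      ← Set.disjoint_iff_inter_eq_empty.1 hST]
    exact Set.subset_inter hS hT
  simpa [x.den_nz] using hempty

theorem eq_zero_of_add_eq_of_disjoint {S T : Set ℕ} (hST : Disjoint S T) {c u v : ℚ}
    (hc : c ∈ denFactorsIn S) (hc1 : c < 1) (hu : u ∈ denFactorsIn S)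
    (hv : v ∈ denFactorsIn T) (hu0 : 0 ≤ u) (hv0 : 0 ≤ v) (h : u + v = c) : v = 0 := by
  have hvS : v ∈ denFactorsIn S := by
    rw [eq_sub_of_add_eq' h]
    exact sub_mem hc hu
  have hv_int : (v.num : ℚ) = v :=
    (den_eq_one_iff v).1 (den_eq_one_of_mem_denFactorsIn_of_disjoint hST hvS hv)
  have hnum_lt : v.num < 1 := by exact_mod_cast hv_int ▸ (by linarith : v < 1)
  have hnum_nonneg : 0 ≤ v.num := num_nonneg.2 hv0
  exact num_eq_zero.1 (by omega)

def nonnegDenFactorsIn (S : Set ℕ) : AddSubmonoid ℚ :=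
  (denFactorsIn S).toAddSubmonoid ⊓ AddSubmonoid.nonneg ℚ

end Rat

theorem nthPrime_injective : Function.Injective nthPrime :=
  Nat.nth_injective Nat.infinite_setOfPred_prime

theorem nthPrime_prime (n : ℕ) : (nthPrime n).Prime :=
  Nat.nth_mem_of_infinite Nat.infinite_setOfPred_prime n

theorem nthPrime_zero : nthPrime 0 = 2 := Nat.nth_prime_zero_eq_two

theorem nthPrime_one : nthPrime 1 = 3 := Nat.nth_prime_one_eq_three

def evenPrimes : Set ℕ := nthPrime '' {n | Even n}

def oddPrimes : Set ℕ := nthPrime '' {n | Odd n}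

theorem disjoint_evenPrimes_oddPrimes : Disjoint evenPrimes oddPrimes :=
  (Set.disjoint_image_iff nthPrime_injective).2 <|
    Set.disjoint_left.2 fun _ he ho => Nat.not_even_iff_odd.2 ho he

theorem primeFactors_nthPrime_subset_image {I : Set ℕ} {n : ℕ} (hn : n ∈ I) :
    ↑(nthPrime n).primeFactors ⊆ nthPrime '' I := by
  simpa [(nthPrime_prime n).primeFactors] using Set.mem_image_of_mem _ hn

theorem one_div_nthPrime_mul_mem_denFactorsIn {I : Set ℕ} {n : ℕ} (hn : n ∈ I)
    (hn2 : n + 2 ∈ I) :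
    1 / ((nthPrime n : ℚ) * nthPrime (n + 2)) ∈ Rat.denFactorsIn (nthPrime '' I) := by
  have hsub : ↑(nthPrime n * nthPrime (n + 2)).primeFactors ⊆ nthPrime '' I := by
    rw [Nat.primeFactors_mul (nthPrime_prime _).ne_zero (nthPrime_prime _).ne_zero,
      Finset.coe_union]
    exact Set.union_subset (primeFactors_nthPrime_subset_image hn)
      (primeFactors_nthPrime_subset_image hn2)
  simpa using Rat.denFactorsIn_mono hsub (Rat.inv_natCast_mem_denFactorsIn _)

theorem Mq_le_nonnegDenFactorsIn_sup :
    Mq ≤ Rat.nonnegDenFactorsIn evenPrimes ⊔ Rat.nonnegDenFactorsIn oddPrimes := by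
  refine AddSubmonoid.closure_le.2 ?_
  rintro _ ⟨n, rfl⟩
  have hpos : (0 : ℚ) ≤ 1 / ((nthPrime n : ℚ) * nthPrime (n + 2)) := by positivity
  rcases Nat.even_or_odd n with hn | hn
  · refine AddSubmonoid.mem_sup_left ⟨?_, hpos⟩
    exact one_div_nthPrime_mul_mem_denFactorsIn (I := {n | Even n}) hn (by simpa [parity_simps])
  · refine AddSubmonoid.mem_sup_right ⟨?_, hpos⟩
    exact one_div_nthPrime_mul_mem_denFactorsIn (I := {n | Odd n}) hn (by simpa [parity_simps])

theorem exists_add_eq_of_mem_Mq {x : ℚ} (hx : x ∈ Mq) :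
    ∃ u v, u ∈ Rat.denFactorsIn evenPrimes ∧ v ∈ Rat.denFactorsIn oddPrimes ∧
      0 ≤ u ∧ 0 ≤ v ∧ u + v = x := by
  obtain ⟨u, ⟨hu, hu0⟩, v, ⟨hv, hv0⟩, rfl⟩ :=
    AddSubmonoid.mem_sup.1 (Mq_le_nonnegDenFactorsIn_sup hx)
  exact ⟨u, v, hu, hv, hu0, hv0, rfl⟩

theorem one_div_nthPrime_mem_Mq (n : ℕ) : 1 / (nthPrime n : ℚ) ∈ Mq := by
  have h := nsmul_mem (AddSubmonoid.subset_closure ⟨n, rfl⟩ : _ ∈ Mq) (nthPrime (n + 2))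
  have hne : (nthPrime (n + 2) : ℚ) ≠ 0 := by exact_mod_cast (nthPrime_prime _).ne_zero
  rwa [nsmul_eq_mul, mul_one_div, mul_comm, ← div_div, div_self hne] at h

theorem one_div_nthPrime_mem_denFactorsIn {I : Set ℕ} {n : ℕ} (hn : n ∈ I) :
    1 / (nthPrime n : ℚ) ∈ Rat.denFactorsIn (nthPrime '' I) := by
  simpa using Rat.denFactorsIn_mono (primeFactors_nthPrime_subset_image hn)
    (Rat.inv_natCast_mem_denFactorsIn _)

theorem one_div_two_mem_Mq : (1 : ℚ) / 2 ∈ Mq := by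
  simpa [nthPrime_zero] using one_div_nthPrime_mem_Mq 0

theorem one_div_three_mem_Mq : (1 : ℚ) / 3 ∈ Mq := by
  simpa [nthPrime_one] using one_div_nthPrime_mem_Mq 1

theorem one_div_two_mem_denFactorsIn_evenPrimes :
    (1 : ℚ) / 2 ∈ Rat.denFactorsIn evenPrimes := by
  unfold evenPrimes
  simpa [nthPrime_zero] using one_div_nthPrime_mem_denFactorsIn (I := {n | Even n}) Even.zero

theorem one_div_three_mem_denFactorsIn_oddPrimes :
    (1 : ℚ) / 3 ∈ Rat.denFactorsIn oddPrimes := by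
  unfold oddPrimes
  simpa [nthPrime_one] using one_div_nthPrime_mem_denFactorsIn (I := {n | Odd n}) odd_one

theorem stmt7 :
    ((1 : ℚ) / 2 ∈ Mq ∧ (1 : ℚ) / 3 ∈ Mq) ∧
    ∀ d ∈ Mq, (∃ a ∈ Mq, (1 : ℚ) / 2 = d + a) → (∃ b ∈ Mq, (1 : ℚ) / 3 = d + b) →
      d = 0 := by
  refine ⟨⟨one_div_two_mem_Mq, one_div_three_mem_Mq⟩, ?_⟩
  rintro d hd ⟨a, ha, hda⟩ ⟨b, hb, hdb⟩
  obtain ⟨dE, dO, hdE, hdO, hdE0, hdO0, rfl⟩ := exists_add_eq_of_mem_Mq hd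
  obtain ⟨aE, aO, haE, haO, haE0, haO0, rfl⟩ := exists_add_eq_of_mem_Mq ha
  obtain ⟨bE, bO, hbE, hbO, hbE0, hbO0, rfl⟩ := exists_add_eq_of_mem_Mq hb
  have hO : dO + aO = 0 := Rat.eq_zero_of_add_eq_of_disjoint disjoint_evenPrimes_oddPrimes
    one_div_two_mem_denFactorsIn_evenPrimes (by norm_num) (add_mem hdE haE) (add_mem hdO haO)
    (by positivity) (by positivity) (by rw [hda]; ring)
  have hE : dE + bE = 0 := Rat.eq_zero_of_add_eq_of_disjoint disjoint_evenPrimes_oddPrimes.symm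
    one_div_three_mem_denFactorsIn_oddPrimes (by norm_num) (add_mem hdO hbO) (add_mem hdE hbE)
    (by positivity) (by positivity) (by rw [hdb]; ring)
  linarith
end

section
/- The subring S = ℤ + X·ℚ[X] of ℚ[X] is not atomic: the element X cannot be written as a finite product of irreducible elements of S. -/
/-- The subring `S = ℤ + X·ℚ[X]` of `ℚ[X]`: polynomials with integer constant term. -/
noncomputable def ZplusXQX : Subring (Polynomial ℚ) :=
  Subring.comap (Polynomial.evalRingHom (0 : ℚ)) (Int.castRingHom ℚ).range

lemma X_mem_ZplusXQX : (Polynomial.X : Polynomial ℚ) ∈ ZplusXQX := by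
  refine ⟨0, ?_⟩
  simp

/-!
For a subring `A` of a field `K`, the ring `A + X·K[X]` is `A.comap (evalRingHom 0)`. If `d ∈ A` is
nonzero with `d⁻¹ ∉ A` (for `ℤ + X·ℚ[X]`, take `d = 2`), every element `a` with `a(0) = 0` factors
as `d · (d⁻¹ a)` into two nonunits, so no such `a` is irreducible. But a factorization of `X` into
irreducibles would, evaluated at `0`, contain a factor vanishing at `0`.
-/

open Polynomial

namespace Subring

variable {K : Type*} [Field K] {A : Subring K}

noncomputable def evalZero (A : Subring K) : A.comap (evalRingHom (0 : K)) →+* K :=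
  (evalRingHom 0).comp (A.comap (evalRingHom 0)).subtype

@[simp]
lemma evalZero_apply (a : A.comap (evalRingHom (0 : K))) : evalZero A a = (a : K[X]).eval 0 := rfl

lemma evalZero_mem (a : A.comap (evalRingHom (0 : K))) : evalZero A a ∈ A := a.2

lemma not_irreducible_of_eval_zero_eq_zero {d : K} (hdA : d ∈ A) (hd0 : d ≠ 0) (hdinv : d⁻¹ ∉ A)
    {a : A.comap (evalRingHom (0 : K))} (ha : (a : K[X]).eval 0 = 0) : ¬ Irreducible a := by
  intro hirr
  let c : A.comap (evalRingHom (0 : K)) := ⟨C d, by simpa using hdA⟩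
  let b : A.comap (evalRingHom (0 : K)) :=
    ⟨C d⁻¹ * a, by simp [mem_comap, ha, A.zero_mem]⟩
  have hab : a = c * b := Subtype.ext (by simp [c, b, ← mul_assoc, ← C_mul, hd0])
  rcases hirr.isUnit_or_isUnit hab with ⟨u, hu⟩ | hb
  · have hdv := congrArg (evalZero A) u.mul_inv
    rw [map_mul, map_one, hu, show evalZero A c = d from eval_C] at hdv
    exact hdinv (eq_inv_of_mul_eq_one_right hdv ▸ evalZero_mem _)
  · have hb0 : evalZero A b = 0 := by simp [b, ha]
    exact not_isUnit_zero (hb0 ▸ hb.map (evalZero A))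

theorem not_exists_prod_irreducible_eq_X {d : K} (hdA : d ∈ A) (hd0 : d ≠ 0) (hdinv : d⁻¹ ∉ A) :
    ¬ ∃ l : Multiset (A.comap (evalRingHom (0 : K))), (∀ a ∈ l, Irreducible a) ∧
      l.prod = ⟨X, by simp [mem_comap, A.zero_mem]⟩ := by
  rintro ⟨l, hirr, hprod⟩
  have hl : (l.map (evalZero A)).prod = 0 := by
    rw [← map_multiset_prod, hprod, evalZero_apply, eval_X]
  obtain ⟨a, ha, ha0⟩ := Multiset.mem_map.mp (Multiset.prod_eq_zero_iff.mp hl)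
  exact not_irreducible_of_eval_zero_eq_zero hdA hd0 hdinv ha0 (hirr a ha)

end Subring

lemma inv_two_not_mem_range_intCast : (2⁻¹ : ℚ) ∉ (Int.castRingHom ℚ).range := by
  rintro ⟨n, hn⟩
  have h : 2 * n = 1 := by exact_mod_cast show (2 * n : ℚ) = 1 by simp [show (n : ℚ) = 2⁻¹ from hn]
  omega

/-- `S = ℤ + X·ℚ[X]` is not atomic: `X` is not a finite product of irreducibles of `S`. -/
theorem stmt9 :
    ¬ ∃ l : Multiset ZplusXQX, (∀ a ∈ l, Irreducible a) ∧
      l.prod = (⟨Polynomial.X, X_mem_ZplusXQX⟩ : ZplusXQX) :=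
  Subring.not_exists_prod_irreducible_eq_X (d := 2) ⟨2, rfl⟩ two_ne_zero inv_two_not_mem_range_intCast
end

section
/- Let R be an integral domain and S a saturated multiplicative subset such that the extension R ⊆ R_S is inert. If R is a weak-ACCP domain, then the localization R_S is a weak-ACCP domain. -/
/-- `r` satisfies ACCP in `R`: every ascending chain of principal ideals
starting at `Rr` stabilizes. -/
def ACCPat {R : Type*} [CommRing R] (r : R) : Prop :=
  ∀ f : ℕ → R, f 0 = r → (∀ n, f (n + 1) ∣ f n) →
    ∃ N, ∀ n, N ≤ n → Ideal.span {f n} = Ideal.span {f N}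

/-- `R` is atomic: every nonzero nonunit is a finite product of irreducibles. -/
def AtomicDom (R : Type*) [CommRing R] : Prop :=
  ∀ r : R, r ≠ 0 → ¬ IsUnit r → ∃ l : Multiset R, (∀ a ∈ l, Irreducible a) ∧ l.prod = r

/-- `R` is weak-ACCP: atomic and every nonempty finite set of nonzero elements has a
common divisor `d` such that `s/d` satisfies ACCP for some `s` in the set. -/
def WeakACCPDom (R : Type*) [CommRing R] : Prop :=
  AtomicDom R ∧ ∀ S : Finset R, S.Nonempty → (∀ s ∈ S, s ≠ (0 : R)) →
    ∃ d : R, (∀ s ∈ S, d ∣ s) ∧ ∃ s ∈ S, ∃ c, s = d * c ∧ ACCPat c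

/-!
An element of `R_S` is associated to an element of `R`, and inertness says that every
factorization in `R_S` of an element of `R` is, up to units, a factorization in `R`. Hence
irreducibles of `R` stay irreducible or become units, chains of principal ideals in `R_S`
starting at an element of `R` lift to chains in `R`, and both atomicity and the weak-ACCP
condition pass from `R` to `R_S` by choosing associates in `R`.
-/

lemma ACCPat.of_dvd {R : Type*} [CommRing R] {a b : R} (ha : ACCPat a) (hba : b ∣ a) :
    ACCPat b := by
  intro f hf0 hf
  obtain ⟨N, hN⟩ := ha (fun | 0 => a | k + 1 => f k) rfl
    (fun | 0 => show f 0 ∣ a from hf0 ▸ hba | k + 1 => hf k)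
  exact ⟨N, fun n hn => (hN (n + 1) (by omega)).trans (hN (N + 1) (by omega)).symm⟩

def RingHom.IsInert {R A : Type*} [CommRing R] [CommRing A] (φ : R →+* A) : Prop :=
  ∀ x y : A, x ≠ 0 → y ≠ 0 → (∃ r : R, φ r = x * y) →
    ∃ u : Aˣ, (∃ r : R, φ r = u * x) ∧ (∃ r : R, φ r = ↑u⁻¹ * y)

namespace RingHom.IsInert

variable {R A : Type*} [CommRing R] [CommRing A] {φ : R →+* A}

lemma exists_mul_eq_of_map_eq_mul (hI : φ.IsInert) (hφ : Function.Injective φ) {r : R}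
    {x y : A} (hxy : φ r = x * y) (hx : x ≠ 0) (hy : y ≠ 0) :
    ∃ r₁ r₂ : R, r₁ * r₂ = r ∧ Associated x (φ r₁) ∧ Associated y (φ r₂) := by
  obtain ⟨u, ⟨r₁, hr₁⟩, ⟨r₂, hr₂⟩⟩ := hI x y hx hy ⟨r, hxy⟩
  refine ⟨r₁, r₂, hφ ?_, ⟨u, by rw [hr₁, mul_comm]⟩, ⟨u⁻¹, by rw [hr₂, mul_comm]⟩⟩
  rw [map_mul, hr₁, hr₂, hxy, mul_mul_mul_comm, ← Units.val_mul, mul_inv_cancel,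
    Units.val_one, one_mul]

lemma exists_dvd_associated_of_dvd (hI : φ.IsInert) (hφ : Function.Injective φ) {r : R}
    {z : A} (hz : z ∣ φ r) (hr : φ r ≠ 0) : ∃ r' : R, r' ∣ r ∧ Associated z (φ r') := by
  obtain ⟨q, hq⟩ := hz
  obtain ⟨r₁, r₂, rfl, hz₁, -⟩ := hI.exists_mul_eq_of_map_eq_mul hφ hq
    (left_ne_zero_of_mul (hq ▸ hr)) (right_ne_zero_of_mul (hq ▸ hr))
  exact ⟨r₁, dvd_mul_right _ _, hz₁⟩

lemma irreducible_map (hI : φ.IsInert) (hφ : Function.Injective φ) {a : R}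
    (ha : Irreducible a) (hu : ¬IsUnit (φ a)) : Irreducible (φ a) := by
  refine ⟨hu, fun b c hbc => ?_⟩
  have ha0 : φ a ≠ 0 := (map_ne_zero_iff φ hφ).mpr ha.ne_zero
  obtain ⟨r₁, r₂, rfl, hb, hc⟩ := hI.exists_mul_eq_of_map_eq_mul hφ hbc
    (left_ne_zero_of_mul (hbc ▸ ha0)) (right_ne_zero_of_mul (hbc ▸ ha0))
  exact (ha.isUnit_or_isUnit rfl).imp (fun h => hb.isUnit_iff.mpr (h.map φ))
    (fun h => hc.isUnit_iff.mpr (h.map φ))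

lemma exists_associated_map_prod (hI : φ.IsInert) (hφ : Function.Injective φ)
    (l : Multiset R) (hl : ∀ a ∈ l, Irreducible a) :
    ∃ m : Multiset A, (∀ b ∈ m, Irreducible b) ∧ Associated (φ l.prod) m.prod := by
  induction l using Multiset.induction_on with
  | empty => exact ⟨0, by simp, by simp⟩
  | cons a l ih =>
    obtain ⟨m, hm, hlm⟩ := ih fun b hb => hl b (Multiset.mem_cons_of_mem hb)
    have ha := hl a (Multiset.mem_cons_self a l)
    rw [Multiset.prod_cons, map_mul]
    by_cases hu : IsUnit (φ a)
    · exact ⟨m, hm, (associated_unit_mul_left _ _ hu).trans hlm⟩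
    · refine ⟨φ a ::ₘ m, ?_, by rw [Multiset.prod_cons]; exact hlm.mul_left _⟩
      rintro b hb
      rcases Multiset.mem_cons.mp hb with rfl | hb
      · exact hI.irreducible_map hφ ha hu
      · exact hm b hb

lemma accpat_map (hI : φ.IsInert) (hφ : Function.Injective φ) {c : R} (hc : ACCPat c)
    (hc0 : c ≠ 0) : ACCPat (φ c) := by
  intro f hf0 hf
  have hne : ∀ n, f n ≠ 0 := by
    intro n
    induction n with
    | zero => exact hf0 ▸ (map_ne_zero_iff φ hφ).mpr hc0
    | succ n ih => exact fun h => ih (zero_dvd_iff.mp (h ▸ hf n))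
  have step : ∀ n (r : R), ∃ r' : R,
      Associated (f n) (φ r) → r' ∣ r ∧ Associated (f (n + 1)) (φ r') := by
    intro n r
    by_cases h : Associated (f n) (φ r)
    · obtain ⟨r', hr'⟩ := hI.exists_dvd_associated_of_dvd hφ ((hf n).trans h.dvd)
        (h.ne_zero_iff.mp (hne n))
      exact ⟨r', fun _ => hr'⟩
    · exact ⟨r, fun h' => absurd h' h⟩
  choose next hnext using step
  let g : ℕ → R := fun n => Nat.rec c next n
  have hg : ∀ n, Associated (f n) (φ (g n)) := by
    intro n
    induction n with
    | zero => exact hf0 ▸ Associated.refl _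
    | succ n ih => exact (hnext n (g n) ih).2
  obtain ⟨N, hN⟩ := hc g rfl fun n => (hnext n (g n) (hg n)).1
  refine ⟨N, fun n hn => le_antisymm ?_ ?_⟩ <;>
    rw [Ideal.span_singleton_le_span_singleton]
  · exact (hg N).dvd.trans ((map_dvd φ (Ideal.span_singleton_le_span_singleton.mp
      (hN n hn).le)).trans (hg n).symm.dvd)
  · exact (hg n).dvd.trans ((map_dvd φ (Ideal.span_singleton_le_span_singleton.mp
      (hN n hn).ge)).trans (hg N).symm.dvd)

end RingHom.IsInert

lemma exists_irreducible_prod_eq_of_associated {M : Type*} [CommMonoid M] {x : M}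
    {m : Multiset M} (hm : ∀ a ∈ m, Irreducible a) (hxm : Associated x m.prod)
    (hx : ¬IsUnit x) : ∃ l : Multiset M, (∀ a ∈ l, Irreducible a) ∧ l.prod = x := by
  obtain ⟨u, hu⟩ := hxm.symm
  obtain ⟨a, ha⟩ : ∃ a, a ∈ m := Multiset.exists_mem_of_ne_zero fun h => hx
    (hu ▸ by simp [h])
  obtain ⟨m', rfl⟩ := Multiset.exists_cons_of_mem ha
  refine ⟨(a * u) ::ₘ m', fun b hb => ?_, ?_⟩
  · rcases Multiset.mem_cons.mp hb with rfl | hb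
    · exact (irreducible_mul_units u).mpr (hm a ha)
    · exact hm b (Multiset.mem_cons_of_mem hb)
  · rw [← hu, Multiset.prod_cons, Multiset.prod_cons, mul_right_comm]

section Inert

variable {R A : Type*} [CommRing R] [CommRing A] (φ : R →+* A)

lemma AtomicDom.of_isInert (hI : φ.IsInert) (hφ : Function.Injective φ)
    (hassoc : ∀ x : A, ∃ r : R, Associated x (φ r)) (hR : AtomicDom R) : AtomicDom A := by
  intro x hx0 hxu
  obtain ⟨r, hxr⟩ := hassoc x
  have hr0 : r ≠ 0 := fun h => hx0 (hxr.eq_zero_iff.mpr (by rw [h, map_zero]))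
  have hru : ¬IsUnit r := fun h => hxu (hxr.isUnit_iff.mpr (h.map φ))
  obtain ⟨l, hl, rfl⟩ := hR r hr0 hru
  obtain ⟨m, hm, hlm⟩ := hI.exists_associated_map_prod hφ l hl
  exact exists_irreducible_prod_eq_of_associated hm (hxr.trans hlm) hxu

theorem WeakACCPDom.of_isInert (hI : φ.IsInert) (hφ : Function.Injective φ)
    (hassoc : ∀ x : A, ∃ r : R, Associated x (φ r)) (hR : WeakACCPDom R) :
    WeakACCPDom A := by
  classical
  refine ⟨AtomicDom.of_isInert φ hI hφ hassoc hR.1, fun T hT hT0 => ?_⟩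
  choose ρ hρ using hassoc
  have hρ0 : ∀ x ∈ T, ρ x ≠ 0 := fun x hx h =>
    hT0 x hx ((hρ x).eq_zero_iff.mpr (by rw [h, map_zero]))
  obtain ⟨d, hd, _, hs, c, hdc, hc⟩ := hR.2 (T.image ρ) (hT.image ρ)
    (Finset.forall_mem_image.mpr hρ0)
  obtain ⟨x₀, hx₀, rfl⟩ := Finset.mem_image.mp hs
  obtain ⟨v, hv⟩ := (hρ x₀).symm
  have hc' : ACCPat (φ c) := hI.accpat_map hφ hc (right_ne_zero_of_mul (hdc ▸ hρ0 x₀ hx₀))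
  refine ⟨φ d, fun x hx => ?_, x₀, hx₀, φ c * v, ?_, hc'.of_dvd (Units.mul_right_dvd.mpr dvd_rfl)⟩
  · exact (map_dvd φ (hd _ (Finset.mem_image_of_mem ρ hx))).trans (hρ x).symm.dvd
  · rw [← hv, hdc, map_mul, mul_assoc]

end Inert

lemma IsLocalization.exists_associated_algebraMap {R : Type*} [CommRing R] (M : Submonoid R)
    {S : Type*} [CommRing S] [Algebra R S] [IsLocalization M S] (z : S) :
    ∃ r : R, Associated z (algebraMap R S r) := by
  obtain ⟨⟨r, s⟩, h⟩ := IsLocalization.surj M z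
  exact ⟨r, ⟨(IsLocalization.map_units S s).unit, h⟩⟩

theorem stmt10_general (R : Type*) [CommRing R] [IsDomain R] (S : Submonoid R)
    (h0 : (0 : R) ∉ S)
    (hinert : ∀ x y : Localization S, x ≠ 0 → y ≠ 0 →
      (∃ r : R, algebraMap R (Localization S) r = x * y) →
      ∃ u : (Localization S)ˣ,
        (∃ r : R, algebraMap R (Localization S) r = (u : Localization S) * x) ∧
        (∃ r : R, algebraMap R (Localization S) r = ((u⁻¹ : (Localization S)ˣ) : Localization S) * y))
    (hR : WeakACCPDom R) :
    WeakACCPDom (Localization S) := by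
  have hS : S ≤ nonZeroDivisors R := fun s hs =>
    mem_nonZeroDivisors_of_ne_zero fun h => h0 (h ▸ hs)
  exact WeakACCPDom.of_isInert (algebraMap R (Localization S)) hinert
    (IsLocalization.injective _ hS) (IsLocalization.exists_associated_algebraMap S) hR

theorem stmt10 (R : Type*) [CommRing R] [IsDomain R] (S : Submonoid R)
    (h0 : (0 : R) ∉ S)
    (hsat : ∀ a b : R, a * b ∈ S → a ∈ S)
    (hinert : ∀ x y : Localization S, x ≠ 0 → y ≠ 0 →
      (∃ r : R, algebraMap R (Localization S) r = x * y) →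
      ∃ u : (Localization S)ˣ,
        (∃ r : R, algebraMap R (Localization S) r = (u : Localization S) * x) ∧
        (∃ r : R, algebraMap R (Localization S) r = ((u⁻¹ : (Localization S)ˣ) : Localization S) * y))
    (hR : WeakACCPDom R) :
    WeakACCPDom (Localization S) :=
  stmt10_general R S h0 hinert hR
end

section
/- For an integral domain R, R is a weak-ACCP domain if and only if the polynomial ring R[X] is a weak-ACCP domain. -/
/-!
ACCP at `r` is accessibility of `r` for strict divisibility, so it is handled by well-founded
induction. For finitely many nonzero polynomials, the weak-ACCP property of `R` applied to all their
nonzero coefficients gives `d ∈ R` dividing each of them, with one of them equal to `d * g` where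
some coefficient `c` of `g` satisfies ACCP. Such a `g` satisfies ACCP in `R[X]`, by induction on
the degree of its divisors and, within one degree, on the accessibility of `c`: divisors of equal
degree differ by constants, and these constants divide `c`. Atomicity of `R[X]` follows by factoring `d` in `R` and `g` through its ACCP.
Conversely, divisors of nonzero constants are constants, so both properties descend to `R`.
-/

def HasACCPCommonDivisors (R : Type*) [CommRing R] : Prop :=
  ∀ S : Finset R, S.Nonempty → (∀ s ∈ S, s ≠ (0 : R)) →
    ∃ d : R, (∀ s ∈ S, d ∣ s) ∧ ∃ s ∈ S, ∃ c, s = d * c ∧ ACCPat c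

theorem weakACCPDom_iff {R : Type*} [CommRing R] :
    WeakACCPDom R ↔ AtomicDom R ∧ HasACCPCommonDivisors R :=
  Iff.rfl

theorem accPat_iff_acc {R : Type*} [CommRing R] [IsDomain R] {r : R} :
    ACCPat r ↔ Acc DvdNotUnit r := by
  constructor
  · intro h
    by_contra hr
    obtain ⟨f, hf0, hf⟩ := not_acc_iff_exists_descending_chain.mp hr
    obtain ⟨N, hN⟩ := h f hf0 fun n ↦ let ⟨_, x, _, hx⟩ := hf n; ⟨x, hx⟩
    exact (hf N).not_associated
      (Ideal.span_singleton_eq_span_singleton.mp (hN (N + 1) N.le_succ))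
  · intro h
    induction h with
    | intro r _ ih =>
      intro f hf0 hf
      have hmono : Monotone fun n ↦ Ideal.span {f n} :=
        monotone_nat_of_le_succ fun n ↦ Ideal.span_singleton_le_span_singleton.mpr (hf n)
      have hdvd (n : ℕ) : f n ∣ r :=
        hf0 ▸ Ideal.span_singleton_le_span_singleton.mp (hmono n.zero_le)
      by_cases hstable : ∀ n, r ∣ f n
      · refine ⟨0, fun n _ ↦ Ideal.span_singleton_eq_span_singleton.mpr ?_⟩
        rw [hf0]
        exact associated_of_dvd_dvd (hdvd n) (hstable n)
      push Not at hstable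
      obtain ⟨n, hn⟩ := hstable
      obtain ⟨N, hN⟩ := ih (f n) (dvdNotUnit_of_dvd_of_not_dvd (hdvd n) hn)
        (fun k ↦ f (n + k)) rfl fun k ↦ hf (n + k)
      refine ⟨n + N, fun m hm ↦ ?_⟩
      obtain ⟨k, rfl⟩ := Nat.exists_eq_add_of_le (le_of_add_le_left hm)
      exact hN k (by omega)

theorem exists_associated_prod_of_acc {α : Type*} [CommMonoidWithZero α] {r : α}
    (h : Acc DvdNotUnit r) (hr : r ≠ 0) :
    ∃ l : Multiset α, (∀ a ∈ l, Irreducible a) ∧ Associated l.prod r := by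
  induction h with
  | intro r _ ih =>
    by_cases hu : IsUnit r
    · exact ⟨0, by simp, by simpa using (associated_one_iff_isUnit.mpr hu).symm⟩
    by_cases hirr : Irreducible r
    · exact ⟨{r}, by simpa using hirr, by simp⟩
    obtain ⟨a, b, hab, ha, hb⟩ : ∃ a b, r = a * b ∧ ¬IsUnit a ∧ ¬IsUnit b := by
      simpa [irreducible_iff, hu] using hirr
    subst hab
    have ha0 : a ≠ 0 := left_ne_zero_of_mul hr
    have hb0 : b ≠ 0 := right_ne_zero_of_mul hr
    obtain ⟨la, hla, hpa⟩ := ih a ⟨ha0, b, hb, rfl⟩ ha0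
    obtain ⟨lb, hlb, hpb⟩ := ih b ⟨hb0, a, ha, mul_comm a b⟩ hb0
    refine ⟨la + lb, fun c hc ↦ ?_, by simpa using hpa.mul_mul hpb⟩
    rcases Multiset.mem_add.mp hc with hc | hc
    exacts [hla c hc, hlb c hc]

theorem atomicDom_iff {R : Type*} [CommRing R] :
    AtomicDom R ↔
      ∀ r : R, r ≠ 0 → ∃ l : Multiset R, (∀ a ∈ l, Irreducible a) ∧ Associated l.prod r := by
  constructor
  · intro h r hr
    by_cases hu : IsUnit r
    · exact ⟨0, by simp, by simpa using (associated_one_iff_isUnit.mpr hu).symm⟩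
    obtain ⟨l, hl, rfl⟩ := h r hr hu
    exact ⟨l, hl, Associated.refl _⟩
  · intro h r hr hu
    obtain ⟨l, hl, u, hlu⟩ := h r hr
    obtain ⟨a, ha⟩ : ∃ a, a ∈ l := Multiset.exists_mem_of_ne_zero fun hl0 ↦
      hu (hlu ▸ by simp [hl0])
    obtain ⟨l', rfl⟩ := Multiset.exists_cons_of_mem ha
    refine ⟨(a * u) ::ₘ l', fun b hb ↦ ?_, ?_⟩
    · rcases Multiset.mem_cons.mp hb with rfl | hb
      · exact (irreducible_mul_units u).mpr (hl a ha)
      · exact hl b (Multiset.mem_cons_of_mem hb)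
    · rw [← hlu, Multiset.prod_cons, Multiset.prod_cons]
      ring

namespace Polynomial

variable {R : Type*} [CommRing R]

theorem acc_of_acc_C {a : R} (h : Acc DvdNotUnit (C a)) : Acc DvdNotUnit a :=
  Subrelation.accessible (r := InvImage DvdNotUnit C)
    (fun ⟨hb, x, hx, hxy⟩ ↦ ⟨C_ne_zero.mpr hb, C x, mt isUnit_C.mp hx, by rw [hxy, map_mul]⟩)
    (InvImage.accessible C h)

theorem dvd_of_C_dvd_C {a b : R} (h : C a ∣ C b) : a ∣ b := by
  simpa using (C_dvd_iff_dvd_coeff _ _).mp h 0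

variable [IsDomain R]

theorem eq_C_of_dvd_C {p : R[X]} {a : R} (ha : a ≠ 0) (h : p ∣ C a) : p = C (p.coeff 0) :=
  eq_C_of_natDegree_eq_zero <| by simpa using natDegree_le_of_dvd h (C_ne_zero.mpr ha)

theorem irreducible_C_iff {a : R} : Irreducible (C a) ↔ Irreducible a := by
  refine ⟨fun h ↦ h.of_map, fun h ↦ ⟨mt isUnit_C.mp h.not_isUnit, fun p q hpq ↦ ?_⟩⟩
  have hp := eq_C_of_dvd_C h.ne_zero (Dvd.intro q hpq.symm)
  have hq := eq_C_of_dvd_C h.ne_zero (Dvd.intro_left p hpq.symm)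
  rw [hp, hq, ← map_mul] at hpq
  rw [hp, hq, isUnit_C, isUnit_C]
  exact h.isUnit_or_isUnit (C_injective hpq)

/-- A proper divisor of `p` of the same degree is `p` divided by a nonunit constant `u`; moving `u`
into `b` makes it a proper factor of `a`, so such descents are absorbed by the accessibility
of `a`. -/
theorem acc_of_C_mul_dvd {g : R[X]} {j : ℕ} (hj : g.coeff j ≠ 0) {p : R[X]}
    (hlow : ∀ q, q ∣ g → q.natDegree < p.natDegree → Acc DvdNotUnit q)
    {a b : R} (ha : Acc DvdNotUnit a) (hab : a * b = g.coeff j) (hp : C b * p ∣ g) :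
    Acc DvdNotUnit p := by
  induction ha generalizing b p with
  | intro a _ ih =>
    refine ⟨p, fun q ⟨hq0, x, hx, hpqx⟩ ↦ ?_⟩
    have hg0 : g ≠ 0 := fun h ↦ hj (by simp [h])
    have hb0 : b ≠ 0 := right_ne_zero_of_mul (hab ▸ hj)
    have hx0 : x ≠ 0 := by
      rintro rfl
      exact hg0 (zero_dvd_iff.mp (by simpa [hpqx] using hp))
    have hdeg : p.natDegree = q.natDegree + x.natDegree := by rw [hpqx, natDegree_mul hq0 hx0]
    have hqg : q ∣ g := (Dvd.intro x hpqx.symm).trans ((Dvd.intro_left _ rfl).trans hp)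
    rcases Nat.eq_zero_or_pos x.natDegree with hxdeg | hxdeg
    · have hxC := eq_C_of_natDegree_eq_zero hxdeg
      have hu : ¬IsUnit (x.coeff 0) := mt isUnit_C.mpr (hxC ▸ hx)
      have hbuq : C (b * x.coeff 0) * q ∣ g := by
        rwa [map_mul, ← hxC, mul_assoc, mul_comm x, ← hpqx]
      obtain ⟨e, he⟩ := (C_dvd_iff_dvd_coeff _ _).mp (dvd_of_mul_right_dvd hbuq) j
      have hae : a = e * x.coeff 0 := mul_right_cancel₀ hb0 (by rw [hab, he]; ring)
      have he0 : e ≠ 0 := by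
        rintro rfl
        exact hj (by rw [he, mul_zero])
      exact ih e ⟨he0, _, hu, hae⟩ (fun r hr hlt ↦ hlow r hr (by omega)) (by rw [he]; ring) hbuq
    · exact hlow q hqg (by omega)

theorem acc_of_acc_coeff {g : R[X]} {j : ℕ} (hj : g.coeff j ≠ 0)
    (h : Acc DvdNotUnit (g.coeff j)) : Acc DvdNotUnit g := by
  suffices ∀ n, ∀ p : R[X], p.natDegree = n → p ∣ g → Acc DvdNotUnit p from this _ g rfl dvd_rfl
  intro n
  induction n using Nat.strong_induction_on with
  | _ n ih =>
    rintro p rfl hp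
    exact acc_of_C_mul_dvd hj (fun q hq hlt ↦ ih _ hlt q rfl hq) h (mul_one _) (by simpa using hp)

end Polynomial

open Polynomial

section

variable {R : Type*} [CommRing R] [IsDomain R]

theorem HasACCPCommonDivisors.exists_C_mul_acc (h : HasACCPCommonDivisors R)
    {T : Finset R[X]} (hT : T.Nonempty) (hT0 : ∀ t ∈ T, t ≠ 0) :
    ∃ d : R, (∀ t ∈ T, C d ∣ t) ∧ ∃ t ∈ T, ∃ g, t = C d * g ∧ Acc DvdNotUnit g := by
  classical
  have hcoeff0 : ∀ b ∈ T.biUnion coeffs, b ≠ 0 := by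
    intro b hb
    obtain ⟨t, -, hbt⟩ := Finset.mem_biUnion.mp hb
    obtain ⟨n, hn, rfl⟩ := mem_coeffs_iff.mp hbt
    exact mem_support_iff.mp hn
  obtain ⟨d, hd, b, hb, c, hbc, hc⟩ := h (T.biUnion coeffs)
    (hT.biUnion fun t ht ↦ coeffs_nonempty_iff.mpr (hT0 t ht)) hcoeff0
  have hdT : ∀ t ∈ T, C d ∣ t := fun t ht ↦ (C_dvd_iff_dvd_coeff _ _).mpr fun i ↦ by
    by_cases hi : t.coeff i = 0
    · simp [hi]
    · exact hd _ (Finset.mem_biUnion.mpr ⟨t, ht, coeff_mem_coeffs hi⟩)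
  have hb0 := hcoeff0 b hb
  obtain ⟨t, ht, hbt⟩ := Finset.mem_biUnion.mp hb
  obtain ⟨j, -, rfl⟩ := mem_coeffs_iff.mp hbt
  obtain ⟨g, rfl⟩ := hdT t ht
  have hgj : g.coeff j = c :=
    mul_left_cancel₀ (left_ne_zero_of_mul (hbc ▸ hb0)) (by rw [← coeff_C_mul, ← hbc])
  refine ⟨d, hdT, _, ht, g, rfl, acc_of_acc_coeff (j := j) ?_ ?_⟩
  · exact hgj ▸ right_ne_zero_of_mul (hbc ▸ hb0)
  · exact hgj ▸ accPat_iff_acc.mp hc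

theorem HasACCPCommonDivisors.polynomial (h : HasACCPCommonDivisors R) :
    HasACCPCommonDivisors R[X] := fun _ hT hT0 ↦
  let ⟨d, hd, t, ht, g, htg, hg⟩ := h.exists_C_mul_acc hT hT0
  ⟨C d, hd, t, ht, g, htg, accPat_iff_acc.mpr hg⟩

theorem AtomicDom.polynomial (ha : AtomicDom R) (h : HasACCPCommonDivisors R) :
    AtomicDom R[X] := by
  rw [atomicDom_iff] at ha ⊢
  intro f hf
  obtain ⟨d, -, t, ht, g, rfl, hg⟩ :=
    h.exists_C_mul_acc (Finset.singleton_nonempty f) (by simpa)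
  rw [Finset.mem_singleton] at ht
  subst ht
  obtain ⟨ld, hld, hpd⟩ := ha d fun hd ↦ hf (by simp [hd])
  obtain ⟨lg, hlg, hpg⟩ := exists_associated_prod_of_acc hg (right_ne_zero_of_mul hf)
  refine ⟨ld.map C + lg, ?_, ?_⟩
  · simpa [or_imp, forall_and, irreducible_C_iff] using ⟨hld, hlg⟩
  · rw [Multiset.prod_add, ← map_multiset_prod]
    exact (hpd.map C).mul_mul hpg

theorem AtomicDom.of_polynomial (h : AtomicDom R[X]) : AtomicDom R := by
  rw [atomicDom_iff] at h ⊢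
  intro r hr
  obtain ⟨l, hl, hlr⟩ := h (C r) (C_ne_zero.mpr hr)
  have hconst : ∀ p ∈ l, p = C (p.coeff 0) :=
    fun p hp ↦ eq_C_of_dvd_C hr ((Multiset.dvd_prod hp).trans hlr.dvd)
  have hl' : l = (l.map fun p ↦ p.coeff 0).map C := by
    rw [Multiset.map_map]
    exact (Multiset.map_id l).symm.trans (Multiset.map_congr rfl hconst)
  refine ⟨l.map fun p ↦ p.coeff 0, fun a ha ↦ ?_, ?_⟩
  · obtain ⟨p, hp, rfl⟩ := Multiset.mem_map.mp ha
    exact irreducible_C_iff.mp (hconst p hp ▸ hl p hp)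
  · rw [hl', ← map_multiset_prod] at hlr
    exact associated_of_dvd_dvd (dvd_of_C_dvd_C hlr.dvd) (dvd_of_C_dvd_C hlr.symm.dvd)

theorem HasACCPCommonDivisors.of_polynomial (h : HasACCPCommonDivisors R[X]) :
    HasACCPCommonDivisors R := by
  classical
  intro S hS hS0
  have hCS0 : ∀ s ∈ S.image C, s ≠ 0 := by
    simpa using hS0
  obtain ⟨D, hD, _, hCs, c, hsc, hc⟩ := h (S.image C) (hS.image C) hCS0
  obtain ⟨s, hs, rfl⟩ := Finset.mem_image.mp hCs
  have hs0 := hS0 s hs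
  have hDC := eq_C_of_dvd_C hs0 (Dvd.intro c hsc.symm)
  have hcC := eq_C_of_dvd_C hs0 (Dvd.intro_left D hsc.symm)
  refine ⟨D.coeff 0, fun s' hs' ↦ ?_, s, hs, c.coeff 0, ?_, ?_⟩
  · exact dvd_of_C_dvd_C (hDC ▸ hD _ (Finset.mem_image_of_mem C hs'))
  · rw [hDC, hcC, ← map_mul] at hsc
    exact C_injective hsc
  · exact accPat_iff_acc.mpr (acc_of_acc_C (hcC ▸ accPat_iff_acc.mp hc))

end

theorem stmt13 (R : Type*) [CommRing R] [IsDomain R] :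
    WeakACCPDom R ↔ WeakACCPDom (Polynomial R) := by
  simp only [weakACCPDom_iff]
  exact ⟨fun ⟨ha, h⟩ ↦ ⟨ha.polynomial h, h.polynomial⟩,
    fun ⟨ha, h⟩ ↦ ⟨ha.of_polynomial, h.of_polynomial⟩⟩
end

section
/- Let K be an algebraically closed field. Then the group algebra K[ℚ] (with exponents in the additive group of rationals) is antimatter: it contains no irreducible elements. -/
/-!
Clearing denominators and multiplying by a monomial, a nonzero nonunit `f` of `K[ℚ]` becomes the
image `p(X^s)` of a polynomial `p` under `X ↦ X^s`. Since `K` is algebraically closed, `p` splits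
into linear factors, and as `f` is not a unit, some factor `X^s - r` is not a unit; then `r ≠ 0`
since `X^s` is a unit. Writing `r = b²`, `X^s - b² = (X^{s/2} - b) (X^{s/2} + b)`, and neither factor
is a unit because the units of the group algebra of a two-unique-sums group such as `ℚ` are
monomials. Thus `f` is a product of two nonunits.
-/

open AddMonoidAlgebra Polynomial

theorem Rat.exists_mul_natCast_eq_intCast (S : Finset ℚ) :
    ∃ n : ℕ, 0 < n ∧ ∀ q ∈ S, ∃ z : ℤ, q * n = z := by
  refine ⟨∏ q ∈ S, q.den, Finset.prod_pos fun q _ => q.den_pos, fun q hq => ?_⟩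
  obtain ⟨t, ht⟩ := Finset.dvd_prod_of_mem Rat.den hq
  exact ⟨q.num * t, by rw [ht]; push_cast; rw [← mul_assoc, Rat.mul_den_eq_num]⟩

theorem Rat.exists_add_eq_natCast_mul (S : Finset ℚ) :
    ∃ s : ℚ, 0 < s ∧ ∃ m : ℚ, ∀ q ∈ S, ∃ k : ℕ, q + m = k * s := by
  obtain ⟨n, hn, hint⟩ := Rat.exists_mul_natCast_eq_intCast S
  obtain ⟨B, hB⟩ := exists_nat_ge (∑ q ∈ S, |q|)
  refine ⟨1 / n, by positivity, B, fun q hq => ?_⟩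
  obtain ⟨z, hz⟩ := hint q hq
  have hqB : -q ≤ B :=
    (neg_le_abs q).trans ((Finset.single_le_sum (fun q _ => abs_nonneg q) hq).trans hB)
  have hzB : (0 : ℚ) ≤ z + B * n := by rw [← hz]; nlinarith
  refine ⟨(z + B * n).toNat, ?_⟩
  have htoNat : ((z + B * n).toNat : ℚ) = z + B * n := by
    exact_mod_cast Int.toNat_of_nonneg (by exact_mod_cast hzB)
  rw [htoNat, ← hz]
  field_simp

namespace AddMonoidAlgebra

variable {R A : Type*}

theorem isUnit_single_one [Semiring R] [AddGroup A] (a : A) :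
    IsUnit (single a (1 : R)) :=
  ⟨⟨single a 1, single (-a) 1, by simp [single_mul_single, one_def],
    by simp [single_mul_single, one_def]⟩, rfl⟩

theorem not_isUnit_of_one_lt_card_support [Semiring R] [NoZeroDivisors R] [AddMonoid A]
    [TwoUniqueSums A] {f : AddMonoidAlgebra R A} (hf : 1 < f.coeff.support.card) : ¬IsUnit f := by
  classical
  -- two distinct uniquely represented sums `a₁ + b₁ ≠ a₂ + b₂` would both lie in the support of `1`
  intro hu
  obtain ⟨g, hfg⟩ := hu.exists_right_inv
  have hg : g.coeff.support.Nonempty := by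
    rw [Finsupp.support_nonempty_iff, Ne, coeff_eq_zero]
    rintro rfl
    rw [mul_zero] at hfg
    have := subsingleton_of_zero_eq_one hfg
    simp [Subsingleton.elim f 0] at hf
  obtain ⟨p₁, hp₁, p₂, hp₂, hne, hu₁, hu₂⟩ :=
    TwoUniqueSums.uniqueAdd_of_one_lt_card (lt_mul_of_lt_of_one_le hf (Finset.card_pos.mpr hg))
  have hsum_eq_zero : ∀ p ∈ f.coeff.support ×ˢ g.coeff.support,
      UniqueAdd f.coeff.support g.coeff.support p.1 p.2 → p.1 + p.2 = 0 := by
    intro p hp huniq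
    rw [Finset.mem_product, Finsupp.mem_support_iff, Finsupp.mem_support_iff] at hp
    have := coeff_mul_add_of_uniqueAdd huniq
    rw [hfg, one_def, coeff_single, Finsupp.single_apply] at this
    by_contra h
    rw [if_neg (Ne.symm h)] at this
    exact mul_ne_zero hp.1 hp.2 this.symm
  rw [Finset.mem_product] at hp₂
  have := hu₁ hp₂.1 hp₂.2 ((hsum_eq_zero p₂ (Finset.mem_product.mpr hp₂) hu₂).trans
    (hsum_eq_zero p₁ hp₁ hu₁).symm)
  exact hne (Prod.ext this.1 this.2).symm

theorem not_isUnit_single_add_single [Semiring R] [NoZeroDivisors R] [AddMonoid A]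
    [TwoUniqueSums A] {a b : A} (hab : a ≠ b) {r s : R} (hr : r ≠ 0) (hs : s ≠ 0) :
    ¬IsUnit (single a r + single b s) := by
  refine not_isUnit_of_one_lt_card_support (Finset.one_lt_card.mpr ⟨a, ?_, b, ?_, hab⟩) <;>
    simp [coeff_add, coeff_single, hab, hab.symm, hr, hs]

theorem exists_mul_single_eq_aeval [CommSemiring R] (f : AddMonoidAlgebra R ℚ) :
    ∃ s : ℚ, 0 < s ∧ ∃ m : ℚ, ∃ p : R[X], aeval (single s 1) p = f * single m 1 := by
  obtain ⟨s, hs, m, hexp⟩ := Rat.exists_add_eq_natCast_mul f.coeff.support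
  refine ⟨s, hs, m, ?_⟩
  suffices f * single m 1 ∈ (aeval (single s (1 : R))).range from this
  rw [← sum_coeff_single f, Finsupp.sum, Finset.sum_mul]
  refine Subalgebra.sum_mem _ fun q hq => ?_
  obtain ⟨k, hk⟩ := hexp q hq
  refine ⟨C (f.coeff q) * X ^ k, ?_⟩
  simp [single_mul_single, single_pow, hk]

theorem exists_not_isUnit_mul_eq_single_sub_algebraMap_mul_self [CommRing R] [IsDomain R]
    {s : ℚ} (hs : s ≠ 0) {b : R} (hb : b ≠ 0) :
    ∃ u v : AddMonoidAlgebra R ℚ, ¬IsUnit u ∧ ¬IsUnit v ∧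
      u * v = single s 1 - algebraMap R _ (b * b) := by
  refine ⟨single (s / 2) 1 + single 0 (-b), single (s / 2) 1 + single 0 b,
    not_isUnit_single_add_single (div_ne_zero hs two_ne_zero) one_ne_zero (neg_ne_zero.mpr hb),
    not_isUnit_single_add_single (div_ne_zero hs two_ne_zero) one_ne_zero hb, ?_⟩
  have hsq : single s (1 : R) = single (s / 2) 1 * single (s / 2) 1 := by
    rw [single_mul_single, add_halves, mul_one]
  rw [hsq, map_mul, single_neg]
  change _ = _ - single 0 b * single 0 b
  ring

end AddMonoidAlgebra

theorem Polynomial.exists_not_isUnit_sub_algebraMap_dvd_aeval {K S : Type*} [Field K]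
    [IsAlgClosed K] [CommRing S] [Algebra K S] {p : K[X]} (hp : p ≠ 0) {x : S}
    (hx : ¬IsUnit (aeval x p)) :
    ∃ r : K, ¬IsUnit (x - algebraMap K S r) ∧ x - algebraMap K S r ∣ aeval x p := by
  by_contra! h
  apply hx
  have hdvd : ∀ r ∈ p.roots, x - algebraMap K S r ∣ aeval x p := fun r hr => by
    simpa using _root_.map_dvd (aeval x) (dvd_iff_isRoot.mpr (isRoot_of_mem_roots hr))
  rw [← C_leadingCoeff_mul_prod_multiset_X_sub_C (p := p) IsAlgClosed.card_roots_eq_natDegree,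
    map_mul, map_multiset_prod, Multiset.map_map, aeval_C]
  refine ((leadingCoeff_ne_zero.mpr hp).isUnit.map _).mul (IsUnit.multisetProd_iff.mpr ?_)
  simp only [Multiset.mem_map, Function.comp_apply]
  rintro _ ⟨r, hr, rfl⟩
  simp only [map_sub, aeval_X, aeval_C]
  by_contra hu
  exact h r hu (hdvd r hr)

/-- The group algebra `K[ℚ]` over an algebraically closed field is antimatter:
it contains no irreducible elements. -/
theorem stmt14 (K : Type*) [Field K] [IsAlgClosed K] :
    ∀ f : AddMonoidAlgebra K ℚ, ¬ Irreducible f := by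
  intro f hf
  obtain ⟨s, hs, m, p, hp⟩ := exists_mul_single_eq_aeval f
  have hm := isUnit_single_one (R := K) m
  have hp0 : p ≠ 0 := by
    rintro rfl
    rw [map_zero, eq_comm, hm.mul_left_eq_zero] at hp
    exact hf.ne_zero hp
  obtain ⟨r, hr, hdvd⟩ := exists_not_isUnit_sub_algebraMap_dvd_aeval hp0
    (by rw [hp, hm.mul_right_iff]; exact hf.not_isUnit)
  rw [hp, hm.dvd_mul_right] at hdvd
  obtain ⟨b, rfl⟩ := IsAlgClosed.exists_eq_mul_self r
  have hb : b ≠ 0 := by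
    rintro rfl
    rw [mul_zero, map_zero, sub_zero] at hr
    exact hr (isUnit_single_one s)
  obtain ⟨u, v, hu, hv, huv⟩ := exists_not_isUnit_mul_eq_single_sub_algebraMap_mul_self hs.ne' hb
  obtain ⟨g, rfl⟩ := huv ▸ hdvd
  rw [mul_assoc] at hf
  exact (hf.isUnit_or_isUnit rfl).elim hu fun h => hv (isUnit_of_mul_isUnit_left h)
end

section
/- Let F be a field of characteristic p > 0 where F is perfect (e.g., F = 𝔽_p). Then every nonunit of the group algebra F[ℚ] is the p-th power of a nonunit; hence F[ℚ] is an antimatter domain. -/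
/-!
Over a perfect field `F` of characteristic `p`, Frobenius is additive on `F[ℚ]`, so
`(∑ cᵢ X^{qᵢ}) = (∑ cᵢ^{1/p} X^{qᵢ/p})^p`: every element is a `p`-th power. A `p`-th power
`g ^ p` is a nonunit iff `g` is, and it is never irreducible since `p ≠ 1`.
-/

open Function

namespace AddMonoidAlgebra

variable {R G : Type*} [CommSemiring R] [AddCommMonoid G]

instance expChar (p : ℕ) [ExpChar R p] : ExpChar R[G] p :=
  expChar_of_injective_algebraMap single_right_injective p

theorem frobenius_surjective (p : ℕ) [ExpChar R p] (hR : Surjective (frobenius R p))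
    (hG : ∀ a : G, ∃ b, p • b = a) : Surjective (frobenius R[G] p) := by
  intro f
  induction f using AddMonoidAlgebra.induction_linear with
  | zero => exact ⟨0, map_zero _⟩
  | add f g hf hg =>
    obtain ⟨f', rfl⟩ := hf
    obtain ⟨g', rfl⟩ := hg
    exact ⟨f' + g', map_add _ _ _⟩
  | single a r =>
    obtain ⟨b, rfl⟩ := hG a
    obtain ⟨s, rfl⟩ := hR r
    exact ⟨single b s, by simp [frobenius_def, single_pow]⟩

end AddMonoidAlgebra

theorem Rat.exists_nsmul_eq {n : ℕ} (hn : n ≠ 0) (q : ℚ) : ∃ r : ℚ, n • r = q :=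
  ⟨q / n, by rw [nsmul_eq_mul]; field_simp⟩

/-- Over a perfect field of characteristic `p > 0`, every nonunit of the group algebra
`F[ℚ]` is a `p`-th power of a nonunit; hence `F[ℚ]` is antimatter. -/
theorem stmt15 (F : Type*) [Field F] (p : ℕ) [Fact p.Prime] [CharP F p]
    [PerfectRing F p] :
    (∀ f : AddMonoidAlgebra F ℚ, ¬ IsUnit f → ∃ g : AddMonoidAlgebra F ℚ,
      ¬ IsUnit g ∧ f = g ^ p) ∧
    (∀ f : AddMonoidAlgebra F ℚ, ¬ Irreducible f) := by
  have hp : p.Prime := Fact.out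
  have exists_pow_eq (f : AddMonoidAlgebra F ℚ) : ∃ g, g ^ p = f :=
    AddMonoidAlgebra.frobenius_surjective p (surjective_frobenius F p)
      (Rat.exists_nsmul_eq hp.ne_zero) f
  constructor
  · intro f hf
    obtain ⟨g, rfl⟩ := exists_pow_eq f
    exact ⟨g, fun hg => hf (hg.pow p), rfl⟩
  · intro f
    obtain ⟨g, rfl⟩ := exists_pow_eq f
    exact not_irreducible_pow hp.ne_one
end

section
/- Let (pₙ) be a strictly increasing sequence of odd primes with Σ 1/pₙ < 1/3, let P = ⟨1/pₙ : n⟩ ⊆ ℚ≥0, let β > 1 be irrational, and let M be the additive submonoid of ℝ≥0 generated by A ∪ B, where A = { 1/p_{j_k} + Σ_{i=1}^{ℓ} 1/p_{j_i} : ℓ ∈ ℕ, 1 ≤ k ≤ ℓ, j₁ < ... < j_ℓ } and B = {β} ∪ { β − Σ_{i=1}^{ℓ} 1/p_i : ℓ ∈ ℕ }. Then M is atomic with set of atoms exactly A ∪ B. -/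
/-!
All generators are positive, so it suffices that no generator is a sum of two or more generators.
Elements of `A` are rational and elements of `B` are `β` minus a rational, so for irrational `β`
such a sum contains no element of `B` when the generator lies in `A`, and exactly one when it
lies in `B`. Either way a sum of `j ≥ 1` elements of `A` would equal `∑_{i ∈ m} 1 / p_i` for a
multiset `m` with fewer than `j` repetitions (one repetition for a generator in `A`, none for a
difference of two partial sums of `∑ 1 / p_i`). But each element of `A` is such a sum with
exactly one repetition, repetitions only accumulate under addition, and below `1` the value
`∑_{i ∈ m} 1 / p_i` determines `m`: every multiplicity is smaller than its prime, and clearing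
denominators and reducing modulo `p_i` recovers the multiplicity of `i`.
-/

/-- The set `A`: sums of distinct generators `1/p_{j₁}, ..., 1/p_{j_ℓ}` with exactly one of
them counted twice. -/
def Aset (p : ℕ → ℕ) : Set ℝ :=
  {x | ∃ (s : Finset ℕ) (k : ℕ), k ∈ s ∧
    x = 1 / (p k : ℝ) + ∑ i ∈ s, 1 / (p i : ℝ)}

/-- The set `B = {β} ∪ {β − Σ_{i=1}^ℓ 1/pᵢ : ℓ ∈ ℕ}`. -/
def Bset (p : ℕ → ℕ) (β : ℝ) : Set ℝ :=
  {x | ∃ n : ℕ, x = β - ∑ i ∈ Finset.range n, 1 / (p i : ℝ)}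

/-- An atom of a positive monoid: a nonzero element that is not a sum of two nonzero
elements of the monoid. -/
def AtomOfR (M : AddSubmonoid ℝ) (a : ℝ) : Prop :=
  a ∈ M ∧ a ≠ 0 ∧ ¬ ∃ u ∈ M, ∃ v ∈ M, u ≠ 0 ∧ v ≠ 0 ∧ a = u + v

/-- A positive monoid is atomic if every nonzero element is a sum of atoms. -/
def AtomicR (M : AddSubmonoid ℝ) : Prop :=
  ∀ x ∈ M, x ≠ 0 → ∃ l : Multiset ℝ, (∀ a ∈ l, AtomOfR M a) ∧ l.sum = x

open Multiset

theorem Multiset.sum_pos_of_ne_zero {α : Type*} [AddCommMonoid α] [PartialOrder α]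
    [IsOrderedCancelAddMonoid α] {l : Multiset α} (hl : ∀ x ∈ l, 0 < x) (hne : l ≠ 0) :
    0 < l.sum := by
  obtain ⟨x, hx⟩ := exists_mem_of_ne_zero hne
  obtain ⟨t, rfl⟩ := exists_cons_of_mem hx
  rw [sum_cons]
  exact add_pos_of_pos_of_nonneg (hl x (mem_cons_self x t))
    (sum_nonneg fun y hy => (hl y (mem_cons_of_mem hy)).le)

section Closure

variable {G : Set ℝ} (hG : ∀ x ∈ G, 0 < x)
include hG

theorem mem_of_atomOfR_closure {a : ℝ} (ha : AtomOfR (AddSubmonoid.closure G) a) : a ∈ G := by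
  obtain ⟨haG, ha0, hirred⟩ := ha
  obtain ⟨l, hlG, rfl⟩ := AddSubmonoid.exists_multiset_of_mem_closure haG
  obtain ⟨x, hx⟩ := exists_mem_of_ne_zero (show l ≠ 0 by rintro rfl; simp at ha0)
  obtain ⟨t, rfl⟩ := exists_cons_of_mem hx
  rcases eq_or_ne t 0 with rfl | ht
  · simpa using hlG x (mem_cons_self x 0)
  · have htG : ∀ y ∈ t, y ∈ G := fun y hy => hlG y (mem_cons_of_mem hy)
    exact (hirred ⟨x, AddSubmonoid.subset_closure (hlG x (mem_cons_self x t)),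
      t.sum, AddSubmonoid.multiset_sum_mem _ t fun y hy => AddSubmonoid.subset_closure (htG y hy),
      (hG x (hlG x (mem_cons_self x t))).ne',
      (sum_pos_of_ne_zero (fun y hy => hG y (htG y hy)) ht).ne', sum_cons x t⟩).elim

variable (hsum_ne : ∀ g ∈ G, ∀ l : Multiset ℝ, (∀ x ∈ l, x ∈ G) → 2 ≤ card l → l.sum ≠ g)
include hsum_ne

theorem atomOfR_closure_of_mem {g : ℝ} (hg : g ∈ G) : AtomOfR (AddSubmonoid.closure G) g := by
  refine ⟨AddSubmonoid.subset_closure hg, (hG g hg).ne', ?_⟩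
  rintro ⟨u, hu, v, hv, hu0, hv0, rfl⟩
  obtain ⟨l₁, hl₁, rfl⟩ := AddSubmonoid.exists_multiset_of_mem_closure hu
  obtain ⟨l₂, hl₂, rfl⟩ := AddSubmonoid.exists_multiset_of_mem_closure hv
  have h₁ : 0 < card l₁ := card_pos.2 (by rintro rfl; simp at hu0)
  have h₂ : 0 < card l₂ := card_pos.2 (by rintro rfl; simp at hv0)
  refine hsum_ne _ hg (l₁ + l₂) (fun x hx => (mem_add.1 hx).elim (hl₁ x) (hl₂ x)) ?_ (sum_add l₁ l₂)
  rw [card_add]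
  omega

theorem atomicR_closure_and_atoms_eq :
    AtomicR (AddSubmonoid.closure G) ∧ {a | AtomOfR (AddSubmonoid.closure G) a} = G := by
  refine ⟨fun x hx _ => ?_,
    Set.ext fun a => ⟨mem_of_atomOfR_closure hG, atomOfR_closure_of_mem hG hsum_ne⟩⟩
  obtain ⟨l, hlG, rfl⟩ := AddSubmonoid.exists_multiset_of_mem_closure hx
  exact ⟨l, fun a ha => atomOfR_closure_of_mem hG hsum_ne (hlG a ha), rfl⟩

end Closure

theorem dvd_of_sum_div_eq_intCast {K ι : Type*} [Field K] [CharZero K] [DecidableEq ι]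
    {F : Finset ι} {q : ι → ℕ} (hq : ∀ i ∈ F, (q i).Prime) (hinj : Set.InjOn q F)
    {c : ι → ℤ} {n : ℤ} (h : ∑ i ∈ F, (c i : K) / q i = n) {i : ι} (hi : i ∈ F) :
    (q i : ℤ) ∣ c i := by
  have hq0 : ∀ j ∈ F, (q j : K) ≠ 0 := fun j hj => by exact_mod_cast (hq j hj).ne_zero
  -- clear denominators; every term but the `i`-th is then a multiple of `q i`
  have hclear : ∑ j ∈ F, c j * ∏ k ∈ F.erase j, (q k : ℤ) = n * ∏ k ∈ F, (q k : ℤ) := by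
    have : ∑ j ∈ F, (c j : K) * ∏ k ∈ F.erase j, (q k : K) = n * ∏ k ∈ F, (q k : K) := by
      rw [← h, Finset.sum_mul]
      refine Finset.sum_congr rfl fun j hj => ?_
      rw [← Finset.mul_prod_erase F _ hj]
      field_simp [hq0 j hj]
    exact_mod_cast this
  have hprime : Prime (q i : ℤ) := Nat.prime_iff_prime_int.1 (hq i hi)
  have hdvd : (q i : ℤ) ∣ c i * ∏ k ∈ F.erase i, (q k : ℤ) := by
    rw [← Finset.add_sum_erase F _ hi] at hclear
    rw [eq_sub_of_add_eq hclear]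
    refine dvd_sub (dvd_mul_of_dvd_right (Finset.dvd_prod_of_mem _ hi) _)
      (Finset.dvd_sum fun j hj => dvd_mul_of_dvd_right (Finset.dvd_prod_of_mem _ ?_) _)
    exact Finset.mem_erase.2 ⟨(Finset.ne_of_mem_erase hj).symm, hi⟩
  refine (hprime.dvd_or_dvd hdvd).resolve_right fun hP => ?_
  obtain ⟨j, hj, hij⟩ := (hprime.dvd_finsetProd_iff _).1 hP
  have hji := Finset.ne_of_mem_erase hj
  have := (Nat.prime_dvd_prime_iff_eq (hq i hi) (hq j (Finset.mem_of_mem_erase hj))).1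
    (Int.natCast_dvd_natCast.1 hij)
  exact hji (hinj (Finset.mem_of_mem_erase hj) hi this.symm)

noncomputable def invSum (p : ℕ → ℕ) (m : Multiset ℕ) : ℝ :=
  (m.map fun i => 1 / (p i : ℝ)).sum

section InvSum

variable {p : ℕ → ℕ}

@[simp]
theorem invSum_add (m m' : Multiset ℕ) : invSum p (m + m') = invSum p m + invSum p m' := by
  simp [invSum]

theorem invSum_val (s : Finset ℕ) : invSum p s.val = ∑ i ∈ s, 1 / (p i : ℝ) := rfl

theorem invSum_cons_val (k : ℕ) (s : Finset ℕ) :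
    invSum p (k ::ₘ s.val) = 1 / (p k : ℝ) + ∑ i ∈ s, 1 / (p i : ℝ) := by
  rw [invSum, Multiset.map_cons, Multiset.sum_cons]
  rfl

theorem invSum_mem_range (m : Multiset ℕ) : invSum p m ∈ (Rat.castHom ℝ).range :=
  Subring.multiset_sum_mem _ _ fun _ hx => by
    obtain ⟨i, -, rfl⟩ := Multiset.mem_map.1 hx
    exact ⟨1 / (p i : ℚ), by simp⟩

theorem invSum_eq_sum_count {m : Multiset ℕ} {F : Finset ℕ}
    (hF : m.toFinset ⊆ F) : invSum p m = ∑ i ∈ F, (count i m : ℝ) / p i := by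
  rw [invSum, Finset.sum_multiset_map_count, Finset.sum_subset hF fun i _ hi => by
    simp [Multiset.count_eq_zero.2 (by simpa using hi)]]
  simp [div_eq_mul_inv]

theorem count_lt_of_invSum_lt_one (hp : ∀ n, 0 < p n) {m : Multiset ℕ} (h : invSum p m < 1)
    (i : ℕ) : count i m < p i := by
  have hle : (count i m : ℝ) / p i ≤ invSum p m := by
    rw [invSum_eq_sum_count (Finset.subset_insert i m.toFinset)]
    exact Finset.single_le_sum (f := fun j => (count j m : ℝ) / p j) (fun _ _ => by positivity)
      (Finset.mem_insert_self i _)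
  have := hle.trans_lt h
  rw [div_lt_one (by exact_mod_cast hp i)] at this
  exact_mod_cast this

theorem eq_of_invSum_eq (hp : ∀ n, (p n).Prime) (hinj : Function.Injective p)
    {m m' : Multiset ℕ} (h : invSum p m = invSum p m') (h1 : invSum p m < 1) : m = m' := by
  have hm := count_lt_of_invSum_lt_one (fun n => (hp n).pos) h1
  have hm' := count_lt_of_invSum_lt_one (fun n => (hp n).pos) (h ▸ h1)
  set F := m.toFinset ∪ m'.toFinset
  have hdiff : ∑ i ∈ F, (((count i m : ℤ) - count i m' : ℤ) : ℝ) / p i = ((0 : ℤ) : ℝ) := by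
    push_cast
    simp only [sub_div, Finset.sum_sub_distrib]
    rw [← invSum_eq_sum_count Finset.subset_union_left,
      ← invSum_eq_sum_count Finset.subset_union_right, h, sub_self]
  ext i
  by_cases hi : i ∈ F
  · have hdvd := dvd_of_sum_div_eq_intCast (fun j _ => hp j) hinj.injOn hdiff hi
    have := Int.eq_zero_of_abs_lt_dvd hdvd (abs_sub_lt_iff.2 ⟨by grind, by grind⟩)
    omega
  · simp only [F, Finset.mem_union, Multiset.mem_toFinset, not_or] at hi
    rw [Multiset.count_eq_zero.2 hi.1, Multiset.count_eq_zero.2 hi.2]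

end InvSum

def Multiset.excess {α : Type*} [DecidableEq α] (m : Multiset α) : ℕ :=
  card m - m.toFinset.card

namespace Multiset

variable {α : Type*} [DecidableEq α]

theorem excess_add_excess_le (m m' : Multiset α) : excess m + excess m' ≤ excess (m + m') := by
  have h := Finset.card_union_le m.toFinset m'.toFinset
  have := toFinset_card_le m
  have := toFinset_card_le m'
  have := toFinset_card_le (m + m')
  rw [← toFinset_add] at h
  simp only [excess, card_add]
  omega

theorem excess_val (s : Finset α) : excess s.val = 0 := by
  simp [excess]

theorem excess_cons_val {k : α} {s : Finset α} (hk : k ∈ s) : excess (k ::ₘ s.val) = 1 := by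
  simp [excess, Finset.insert_eq_of_mem hk]

end Multiset

section Generators

variable {p : ℕ → ℕ}

theorem mem_Aset_iff {x : ℝ} :
    x ∈ Aset p ↔ ∃ (s : Finset ℕ) (k : ℕ), k ∈ s ∧ x = invSum p (k ::ₘ s.val) := by
  simp only [Aset, Set.mem_ofPred_eq, invSum_cons_val]

theorem pos_of_mem_Aset (hp : ∀ n, 0 < p n) {x : ℝ} (hx : x ∈ Aset p) : 0 < x := by
  obtain ⟨s, k, -, rfl⟩ := hx
  have := hp k
  positivity

theorem lt_of_mem_Aset (hS : ∀ s : Finset ℕ, ∑ i ∈ s, 1 / (p i : ℝ) < 1 / 3) {x : ℝ}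
    (hx : x ∈ Aset p) : x < 2 / 3 := by
  obtain ⟨s, k, hk, rfl⟩ := hx
  have : 1 / (p k : ℝ) ≤ ∑ i ∈ s, 1 / (p i : ℝ) :=
    Finset.single_le_sum (f := fun i => 1 / (p i : ℝ)) (fun _ _ => by positivity) hk
  linarith [hS s]

theorem lt_of_mem_Bset (hS : ∀ s : Finset ℕ, ∑ i ∈ s, 1 / (p i : ℝ) < 1 / 3) {β x : ℝ}
    (hβ : 1 < β) (hx : x ∈ Bset p β) : 2 / 3 < x := by
  obtain ⟨n, rfl⟩ := hx
  linarith [hS (Finset.range n)]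

theorem exists_invSum_of_forall_mem_Aset {l : Multiset ℝ} (hl : ∀ x ∈ l, x ∈ Aset p) :
    ∃ m : Multiset ℕ, l.sum = invSum p m ∧ card l ≤ m.excess := by
  induction l using Multiset.induction_on with
  | empty => exact ⟨0, by simp [invSum], by simp⟩
  | cons x l ih =>
    obtain ⟨m, hm, hcard⟩ := ih fun y hy => hl y (mem_cons_of_mem hy)
    obtain ⟨s, k, hk, hx⟩ := mem_Aset_iff.1 (hl x (mem_cons_self x l))
    refine ⟨k ::ₘ s.val + m, by rw [sum_cons, invSum_add, hx, hm], ?_⟩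
    have := excess_add_excess_le (k ::ₘ s.val) m
    rw [excess_cons_val hk] at this
    rw [card_cons]
    omega

theorem sum_ne_invSum_of_forall_mem_Aset (hp : ∀ n, (p n).Prime) (hinj : Function.Injective p)
    {l : Multiset ℝ} (hl : ∀ x ∈ l, x ∈ Aset p) {m : Multiset ℕ} (hm : m.excess < card l)
    (h1 : invSum p m < 1) : l.sum ≠ invSum p m := by
  intro h
  obtain ⟨m', hm', hcard⟩ := exists_invSum_of_forall_mem_Aset hl
  rw [hm'] at h
  rw [eq_of_invSum_eq hp hinj h (h ▸ h1)] at hcard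
  omega

theorem sum_range_sub_sum_range_eq_invSum {n₀ n₁ : ℕ}
    (h : 0 < ∑ i ∈ Finset.range n₁, 1 / (p i : ℝ) - ∑ i ∈ Finset.range n₀, 1 / (p i : ℝ)) :
    ∑ i ∈ Finset.range n₁, 1 / (p i : ℝ) - ∑ i ∈ Finset.range n₀, 1 / (p i : ℝ) =
      invSum p (Finset.Ico n₀ n₁).val := by
  have hle : n₀ ≤ n₁ := by
    by_contra! hlt
    have := Finset.sum_le_sum_of_subset_of_nonneg (Finset.range_subset_range.2 hlt.le)
      fun i _ _ => (by positivity : 0 ≤ 1 / (p i : ℝ))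
    linarith
  rw [invSum_val, Finset.sum_Ico_eq_sub _ hle]

end Generators

section Irrationality

variable {p : ℕ → ℕ} {β : ℝ}

theorem mem_range_of_mem_Aset {x : ℝ} (hx : x ∈ Aset p) : x ∈ (Rat.castHom ℝ).range := by
  obtain ⟨s, k, -, rfl⟩ := mem_Aset_iff.1 hx
  exact invSum_mem_range _

theorem sub_mem_range_of_mem_Bset {x : ℝ} (hx : x ∈ Bset p β) :
    x - β ∈ (Rat.castHom ℝ).range := by
  obtain ⟨n, rfl⟩ := hx
  rw [sub_sub_cancel_left, ← invSum_val]
  exact neg_mem (invSum_mem_range _)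

theorem sum_sub_card_nsmul_mem_range {l : Multiset ℝ} (hl : ∀ x ∈ l, x ∈ Bset p β) :
    l.sum - card l • β ∈ (Rat.castHom ℝ).range := by
  have : l.sum - card l • β = (l.map (· - β)).sum := by
    rw [sum_map_sub, map_id', map_const', sum_replicate]
  rw [this]
  exact Subring.multiset_sum_mem _ _ fun y hy => by
    obtain ⟨x, hx, rfl⟩ := mem_map.1 hy
    exact sub_mem_range_of_mem_Bset (hl x hx)

theorem eq_of_sub_nsmul_mem_range (hβ : Irrational β) {x : ℝ} {m n : ℕ}
    (hm : x - m • β ∈ (Rat.castHom ℝ).range) (hn : x - n • β ∈ (Rat.castHom ℝ).range) :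
    m = n := by
  by_contra hmn
  obtain ⟨q, hq⟩ := sub_mem hn hm
  refine hβ.intCast_mul (m := (m : ℤ) - n) (by omega) ⟨q, ?_⟩
  simp only [Rat.coe_castHom, nsmul_eq_mul] at hq
  push_cast
  linarith

end Irrationality

theorem sum_ne_of_mem_Aset_union_Bset {p : ℕ → ℕ} {β : ℝ} (hp : ∀ n, (p n).Prime)
    (hinj : Function.Injective p) (hS : ∀ s : Finset ℕ, ∑ i ∈ s, 1 / (p i : ℝ) < 1 / 3)
    (hβ : Irrational β) {g : ℝ} (hg : g ∈ Aset p ∪ Bset p β) {l : Multiset ℝ}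
    (hl : ∀ x ∈ l, x ∈ Aset p ∪ Bset p β) (hcard : 2 ≤ card l) : l.sum ≠ g := by
  classical
  intro hlg
  have hsplit := filter_add_not (· ∈ Bset p β) l
  set lB := l.filter (· ∈ Bset p β)
  set lA := l.filter (· ∉ Bset p β)
  have hlA : ∀ x ∈ lA, x ∈ Aset p := fun x hx =>
    (hl x (mem_filter.1 hx).1).resolve_right (mem_filter.1 hx).2
  have hlB : ∀ x ∈ lB, x ∈ Bset p β := fun _ hx => (mem_filter.1 hx).2
  have hrat : g - card lB • β ∈ (Rat.castHom ℝ).range := by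
    rw [← hlg, ← hsplit, sum_add, add_sub_right_comm]
    exact add_mem (sum_sub_card_nsmul_mem_range hlB)
      (Subring.multiset_sum_mem _ _ fun x hx => mem_range_of_mem_Aset (hlA x hx))
  rw [← hsplit, card_add] at hcard
  rw [← hsplit, sum_add] at hlg
  rcases hg with hgA | ⟨n₀, hg⟩
  · have hB : lB = 0 := card_eq_zero.1 <|
      eq_of_sub_nsmul_mem_range hβ hrat (by simpa using mem_range_of_mem_Aset hgA)
    obtain ⟨s, k, hk, rfl⟩ := mem_Aset_iff.1 hgA
    rw [hB, sum_zero, zero_add] at hlg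
    rw [hB, card_zero, zero_add] at hcard
    exact sum_ne_invSum_of_forall_mem_Aset hp hinj hlA (by rw [excess_cons_val hk]; omega)
      ((lt_of_mem_Aset hS hgA).trans (by norm_num)) hlg
  · have hB : card lB = 1 := eq_of_sub_nsmul_mem_range hβ hrat (by
      rw [hg, one_nsmul, sub_sub_cancel_left, ← invSum_val]; exact neg_mem (invSum_mem_range _))
    obtain ⟨b, hb⟩ := card_eq_one.1 hB
    obtain ⟨n₁, hbn⟩ := hlB b (by simp [hb])
    rw [hb, sum_singleton, hbn, hg] at hlg
    have hA : 0 < card lA := by omega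
    have hpos : 0 < lA.sum := sum_pos_of_ne_zero
      (fun x hx => pos_of_mem_Aset (fun n => (hp n).pos) (hlA x hx)) (card_pos.1 hA)
    have hIco : lA.sum = invSum p (Finset.Ico n₀ n₁).val := by
      rw [← sum_range_sub_sum_range_eq_invSum] <;> linarith
    refine sum_ne_invSum_of_forall_mem_Aset hp hinj hlA (by rw [excess_val]; omega) ?_ hIco
    rw [invSum_val]
    linarith [hS (Finset.Ico n₀ n₁)]

theorem stmt16_general (p : ℕ → ℕ) (hmono : StrictMono p) (hprime : ∀ n, (p n).Prime)
    (hsum : Summable (fun n => 1 / (p n : ℝ)))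
    (hlt : (∑' n : ℕ, 1 / (p n : ℝ)) < 1 / 3)
    (β : ℝ) (hβ1 : 1 < β) (hβirr : Irrational β)
    (M : AddSubmonoid ℝ) (hM : M = AddSubmonoid.closure (Aset p ∪ Bset p β)) :
    AtomicR M ∧ {a : ℝ | AtomOfR M a} = Aset p ∪ Bset p β := by
  subst hM
  have hS (s : Finset ℕ) : ∑ i ∈ s, 1 / (p i : ℝ) < 1 / 3 :=
    (hsum.sum_le_tsum s fun _ _ => by positivity).trans_lt hlt
  refine atomicR_closure_and_atoms_eq ?_ fun g hg l hl hcard =>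
    sum_ne_of_mem_Aset_union_Bset hprime hmono.injective hS hβirr hg hl hcard
  rintro x (hx | hx)
  · exact pos_of_mem_Aset (fun n => (hprime n).pos) hx
  · linarith [lt_of_mem_Bset hS hβ1 hx]

theorem stmt16 (p : ℕ → ℕ) (hmono : StrictMono p) (hprime : ∀ n, (p n).Prime)
    (hodd : ∀ n, Odd (p n))
    (hsum : Summable (fun n => 1 / (p n : ℝ)))
    (hlt : (∑' n : ℕ, 1 / (p n : ℝ)) < 1 / 3)
    (β : ℝ) (hβ1 : 1 < β) (hβirr : Irrational β)
    (M : AddSubmonoid ℝ) (hM : M = AddSubmonoid.closure (Aset p ∪ Bset p β)) :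
    AtomicR M ∧ {a : ℝ | AtomOfR M a} = Aset p ∪ Bset p β :=
  stmt16_general p hmono hprime hsum hlt β hβ1 hβirr M hM
end

section
/- With the monoid M of the previous construction (generated by A ∪ B with β_n := β − Σ_{i=1}^{n} 1/p_i ∈ B), the sequence of principal ideals (2β_n + M)_{n∈ℕ} is a strictly ascending chain that does not stabilize; hence M does not satisfy ACCP. -/
/-- `β_n = β − Σ_{i=1}^n 1/pᵢ`. -/
noncomputable def betaSeq (p : ℕ → ℕ) (β : ℝ) (n : ℕ) : ℝ :=
  β - ∑ i ∈ Finset.range n, 1 / (p i : ℝ)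

/-- The coset `b + M` inside `ℝ`. -/
def cosetR (M : AddSubmonoid ℝ) (b : ℝ) : Set ℝ := {x | ∃ c ∈ M, x = b + c}

/-- `M` satisfies ACCP. -/
def ACCPR (M : AddSubmonoid ℝ) : Prop :=
  ∀ f : ℕ → ℝ, (∀ n, f n ∈ M) → (∀ n, cosetR M (f n) ⊆ cosetR M (f (n + 1))) →
    ∃ N, ∀ n, N ≤ n → cosetR M (f n) = cosetR M (f N)

/-!
Since `β_n = β_{n+1} + 1/p_n`, the principal ideal of `2β_n` sits inside that of `2β_{n+1}`,
the difference `2/p_n` being an element of `A`. Every element of `M` is nonnegative (the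
generators in `B` are, because `Σ 1/pᵢ < 1/3 < 1 < β`), so `2β_{n+1} = 2β_n + c` with `c ∈ M` is
impossible and each inclusion is strict.
-/

section Cosets

variable {M : AddSubmonoid ℝ}

lemma mem_cosetR_self (b : ℝ) : b ∈ cosetR M b :=
  ⟨0, M.zero_mem, (add_zero b).symm⟩

lemma cosetR_subset_of_eq_add {a b d : ℝ} (hd : d ∈ M) (h : a = b + d) :
    cosetR M a ⊆ cosetR M b := by
  rintro x ⟨c, hc, rfl⟩
  exact ⟨d + c, M.add_mem hd hc, by rw [h, add_assoc]⟩

lemma cosetR_ne_of_eq_add {a b d : ℝ} (hM : ∀ x ∈ M, 0 ≤ x) (hd : 0 < d) (h : a = b + d) :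
    cosetR M a ≠ cosetR M b := by
  intro heq
  obtain ⟨c, hc, hbc⟩ : b ∈ cosetR M a := heq ▸ mem_cosetR_self b
  linarith [hM c hc]

lemma not_ACCPR_of_strictMono_cosetR (f : ℕ → ℝ) (hf : ∀ n, f n ∈ M)
    (hsub : ∀ n, cosetR M (f n) ⊆ cosetR M (f (n + 1)))
    (hne : ∀ n, cosetR M (f n) ≠ cosetR M (f (n + 1))) : ¬ ACCPR M := by
  intro hacc
  obtain ⟨N, hN⟩ := hacc f hf hsub
  exact hne N (hN (N + 1) N.le_succ).symm

end Cosets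

lemma betaSeq_eq_betaSeq_succ_add (p : ℕ → ℕ) (β : ℝ) (n : ℕ) :
    betaSeq p β n = betaSeq p β (n + 1) + 1 / (p n : ℝ) := by
  simp only [betaSeq, Finset.sum_range_succ]
  ring

lemma two_div_mem_Aset (p : ℕ → ℕ) (n : ℕ) : 2 / (p n : ℝ) ∈ Aset p :=
  ⟨{n}, n, Finset.mem_singleton_self n, by rw [Finset.sum_singleton]; ring⟩

lemma betaSeq_mem_Bset (p : ℕ → ℕ) (β : ℝ) (n : ℕ) : betaSeq p β n ∈ Bset p β :=
  ⟨n, rfl⟩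

section Nonneg

variable {p : ℕ → ℕ} {β : ℝ}

lemma betaSeq_nonneg (hsum : Summable (fun n => 1 / (p n : ℝ)))
    (hβ : (∑' n, 1 / (p n : ℝ)) ≤ β) (n : ℕ) : 0 ≤ betaSeq p β n := by
  have : ∑ i ∈ Finset.range n, 1 / (p i : ℝ) ≤ ∑' i, 1 / (p i : ℝ) :=
    hsum.sum_le_tsum _ fun i _ => by positivity
  unfold betaSeq
  linarith

lemma nonneg_of_mem_Aset {x : ℝ} (hx : x ∈ Aset p) : 0 ≤ x := by
  obtain ⟨s, k, -, rfl⟩ := hx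
  positivity

lemma nonneg_of_mem_closure_Aset_union_Bset (hsum : Summable (fun n => 1 / (p n : ℝ)))
    (hβ : (∑' n, 1 / (p n : ℝ)) ≤ β) {x : ℝ}
    (hx : x ∈ AddSubmonoid.closure (Aset p ∪ Bset p β)) : 0 ≤ x := by
  refine AddSubmonoid.closure_induction ?_ le_rfl (fun _ _ _ _ => add_nonneg) hx
  rintro y (hy | ⟨n, rfl⟩)
  · exact nonneg_of_mem_Aset hy
  · exact betaSeq_nonneg hsum hβ n

end Nonneg

theorem stmt17_general (p : ℕ → ℕ) (hprime : ∀ n, (p n).Prime)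
    (hsum : Summable (fun n => 1 / (p n : ℝ)))
    (hlt : (∑' n : ℕ, 1 / (p n : ℝ)) < 1 / 3)
    (β : ℝ) (hβ1 : 1 < β)
    (M : AddSubmonoid ℝ) (hM : M = AddSubmonoid.closure (Aset p ∪ Bset p β)) :
    (∀ n : ℕ, 2 * betaSeq p β n ∈ M) ∧
    (∀ n : ℕ, cosetR M (2 * betaSeq p β n) ⊆ cosetR M (2 * betaSeq p β (n + 1)) ∧
      cosetR M (2 * betaSeq p β n) ≠ cosetR M (2 * betaSeq p β (n + 1))) ∧
    ¬ ACCPR M := by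
  have hA : Aset p ⊆ M := hM ▸ fun _ hx => AddSubmonoid.subset_closure (Or.inl hx)
  have hB : Bset p β ⊆ M := hM ▸ fun _ hx => AddSubmonoid.subset_closure (Or.inr hx)
  have hnonneg : ∀ x ∈ M, 0 ≤ x := fun _ hx =>
    nonneg_of_mem_closure_Aset_union_Bset hsum (by linarith) (hM ▸ hx)
  have hmem (n : ℕ) : 2 * betaSeq p β n ∈ M := by
    rw [two_mul]
    exact M.add_mem (hB (betaSeq_mem_Bset p β n)) (hB (betaSeq_mem_Bset p β n))
  have hgap_pos (n : ℕ) : 0 < 2 / (p n : ℝ) := by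
    have := (hprime n).pos
    positivity
  have hstep (n : ℕ) : 2 * betaSeq p β n = 2 * betaSeq p β (n + 1) + 2 / (p n : ℝ) := by
    rw [betaSeq_eq_betaSeq_succ_add p β n]
    ring
  have hsub n := cosetR_subset_of_eq_add (hA (two_div_mem_Aset p n)) (hstep n)
  have hne n := cosetR_ne_of_eq_add hnonneg (hgap_pos n) (hstep n)
  exact ⟨hmem, fun n => ⟨hsub n, hne n⟩, not_ACCPR_of_strictMono_cosetR _ hmem hsub hne⟩

theorem stmt17 (p : ℕ → ℕ) (hmono : StrictMono p) (hprime : ∀ n, (p n).Prime)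
    (hodd : ∀ n, Odd (p n))
    (hsum : Summable (fun n => 1 / (p n : ℝ)))
    (hlt : (∑' n : ℕ, 1 / (p n : ℝ)) < 1 / 3)
    (β : ℝ) (hβ1 : 1 < β) (hβirr : Irrational β)
    (M : AddSubmonoid ℝ) (hM : M = AddSubmonoid.closure (Aset p ∪ Bset p β)) :
    (∀ n : ℕ, 2 * betaSeq p β n ∈ M) ∧
    (∀ n : ℕ, cosetR M (2 * betaSeq p β n) ⊆ cosetR M (2 * betaSeq p β (n + 1)) ∧
      cosetR M (2 * betaSeq p β n) ≠ cosetR M (2 * betaSeq p β (n + 1))) ∧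
    ¬ ACCPR M :=
  stmt17_general p hprime hsum hlt β hβ1 M hM
end

section
/- Let P be the additive submonoid of ℚ≥0 generated by {1/pₙ : n ∈ ℕ} for a strictly increasing sequence of primes (pₙ). If q = Σ_{i=1}^{ℓ} n_i/p_i ∈ P with n_i ∈ ℕ₀ and min{n_j, n_k} ≥ 2 for some indices j ≠ k in [1,ℓ], then q lies in the submonoid ⟨A⟩ generated by A = { 1/p_{j_k} + Σ_{i=1}^{ℓ} 1/p_{j_i} : 1 ≤ k ≤ ℓ, j₁ < ... < j_ℓ }. -/
/-!
Since `2/pᵢ ∈ A`, it suffices to find some `∑ dᵢ/pᵢ ∈ ⟨A⟩` with `dᵢ ≤ cᵢ` and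
`dᵢ ≡ cᵢ (mod 2)` for all `i`. Let `O` be the set of indices with `cᵢ` odd, and `j ≠ k` with
`cⱼ, cₖ ≥ 2`. The element `1/pⱼ + ∑_{i ∈ O ∪ {j}} 1/pᵢ ∈ A` has the right parity everywhere
except possibly at `j`; if `cⱼ` is odd, then `cⱼ ≥ 3` and adding `1/pⱼ + 2/pₖ ∈ A` repairs it,
as `cₖ` has room for two more.
-/

/-- The set `A ⊆ ℚ`: sums of distinct generators `1/p_{j₁}, ..., 1/p_{j_ℓ}` with exactly
one of them counted twice. -/
def AsetQ (p : ℕ → ℕ) : Set ℚ :=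
  {x | ∃ (s : Finset ℕ) (k : ℕ), k ∈ s ∧
    x = 1 / (p k : ℚ) + ∑ i ∈ s, 1 / (p i : ℚ)}

open Finset

section WeightedSum

variable (p : ℕ → ℕ) (ℓ : ℕ)

def weightedSum (c : ℕ → ℕ) : ℚ :=
  ∑ i ∈ range ℓ, (c i : ℚ) / p i

variable {p ℓ}

lemma weightedSum_add (c d : ℕ → ℕ) :
    weightedSum p ℓ (c + d) = weightedSum p ℓ c + weightedSum p ℓ d := by
  simp only [weightedSum, Pi.add_apply, Nat.cast_add, add_div, sum_add_distrib]

lemma two_div_mem_AsetQ (k : ℕ) : 2 / (p k : ℚ) ∈ AsetQ p :=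
  ⟨{k}, k, mem_singleton_self k, by rw [sum_singleton]; ring⟩

lemma weightedSum_ite_mem_AsetQ {s : Finset ℕ} {k : ℕ} (hs : s ⊆ range ℓ) (hk : k ∈ s) :
    weightedSum p ℓ (fun i => (if i ∈ s then 1 else 0) + if i = k then 1 else 0) ∈ AsetQ p := by
  refine ⟨s, k, hk, ?_⟩
  simp only [weightedSum, Nat.cast_add, Nat.cast_ite, Nat.cast_one, Nat.cast_zero, add_div,
    ite_div, zero_div, sum_add_distrib, sum_ite_mem, inter_eq_right.2 hs,
    sum_ite_eq', if_pos (hs hk)]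
  ring

lemma weightedSum_mem_closure_AsetQ_of_even {c : ℕ → ℕ} (hc : ∀ i ∈ range ℓ, Even (c i)) :
    weightedSum p ℓ c ∈ AddSubmonoid.closure (AsetQ p) := by
  refine AddSubmonoid.sum_mem _ fun i hi => ?_
  obtain ⟨m, hm⟩ := hc i hi
  have hci : (c i : ℚ) / p i = m • (2 / (p i : ℚ)) := by
    rw [hm, nsmul_eq_mul]; push_cast; ring
  rw [hci]
  exact nsmul_mem (AddSubmonoid.subset_closure (two_div_mem_AsetQ i)) m

lemma weightedSum_mem_closure_AsetQ_of_le {c d : ℕ → ℕ}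
    (hd : weightedSum p ℓ d ∈ AddSubmonoid.closure (AsetQ p))
    (hle : ∀ i ∈ range ℓ, d i ≤ c i) (heven : ∀ i ∈ range ℓ, Even (c i - d i)) :
    weightedSum p ℓ c ∈ AddSubmonoid.closure (AsetQ p) := by
  have hc : weightedSum p ℓ c = weightedSum p ℓ d + weightedSum p ℓ (c - d) := by
    rw [← weightedSum_add]
    refine sum_congr rfl fun i hi => ?_
    rw [Pi.add_apply, Pi.sub_apply, Nat.add_sub_cancel' (hle i hi)]
  rw [hc]
  exact add_mem hd (weightedSum_mem_closure_AsetQ_of_even heven)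

end WeightedSum

theorem stmt18_general (p : ℕ → ℕ) :
    ∀ (ℓ : ℕ) (c : ℕ → ℕ),
      (∃ j k : ℕ, j < ℓ ∧ k < ℓ ∧ j ≠ k ∧ 2 ≤ c j ∧ 2 ≤ c k) →
      (∑ i ∈ Finset.range ℓ, (c i : ℚ) / (p i : ℚ)) ∈
        AddSubmonoid.closure (AsetQ p) := by
  rintro ℓ c ⟨j, k, hj, hk, hjk, hcj, hck⟩
  set O := (range ℓ).filter fun i => c i % 2 = 1
  have hO : insert j O ⊆ range ℓ := insert_subset (mem_range.2 hj) (filter_subset _ _)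
  have hA := AddSubmonoid.subset_closure
    (weightedSum_ite_mem_AsetQ (p := p) hO (mem_insert_self j O))
  change weightedSum p ℓ c ∈ _
  by_cases hcj_even : c j % 2 = 0
  · refine weightedSum_mem_closure_AsetQ_of_le hA (fun i hi => ?_)
      (fun i hi => Nat.even_iff.2 ?_) <;>
    · simp only [O, mem_insert, mem_filter, hi, true_and]
      rcases eq_or_ne i j with rfl | hij <;> split_ifs <;> omega
  · have hjk_sub : {j, k} ⊆ range ℓ :=
      insert_subset (mem_range.2 hj) (singleton_subset_iff.2 (mem_range.2 hk))
    have hB := AddSubmonoid.subset_closure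
      (weightedSum_ite_mem_AsetQ (p := p) hjk_sub (mem_insert_of_mem (mem_singleton_self k)))
    have hAB := add_mem hA hB
    rw [← weightedSum_add] at hAB
    refine weightedSum_mem_closure_AsetQ_of_le hAB (fun i hi => ?_)
      (fun i hi => Nat.even_iff.2 ?_) <;>
    · simp only [O, Pi.add_apply, mem_insert, mem_filter, mem_singleton, hi, true_and]
      rcases eq_or_ne i j with rfl | hij
      · split_ifs <;> omega
      rcases eq_or_ne i k with rfl | hik <;> split_ifs <;> omega

theorem stmt18 (p : ℕ → ℕ) (hmono : StrictMono p) (hprime : ∀ n, (p n).Prime)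
    (hodd : ∀ n, Odd (p n))
    (hsum : Summable (fun n => 1 / (p n : ℝ)))
    (hlt : (∑' n : ℕ, 1 / (p n : ℝ)) < 1 / 3) :
    ∀ (ℓ : ℕ) (c : ℕ → ℕ),
      (∃ j k : ℕ, j < ℓ ∧ k < ℓ ∧ j ≠ k ∧ 2 ≤ c j ∧ 2 ≤ c k) →
      (∑ i ∈ Finset.range ℓ, (c i : ℚ) / (p i : ℚ)) ∈
        AddSubmonoid.closure (AsetQ p) :=
  stmt18_general p
end
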